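/- arXiv:1810.03178 — 10 statements merged into one kernel-verified Lean document; each statement's English description precedes it below -/
import Mathlib

section
/- Let A be a type, let S be the free semiring on A, and let E be a set of elements of S. For all p, q ∈ S, the pair (p, q) belongs to the semiring congruence on S generated by the set of pairs {(e, 1) : e ∈ E} if and only if there exists r ∈ S which is an expansion of both p and q. -/
/-- The free semiring on the alphabet `A`, realized as the monoid algebra of the
free monoid on `A` with natural number coefficients. -/
abbrev FreeSemiring' (A : Type*) := MonoidAlgebra ℕ (FreeMonoid A)

/-- The monomial corresponding to a word `u`. -/
noncomputable def mono {A : Type*} (u : FreeMonoid A) : FreeSemiring' A :=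
  MonoidAlgebra.of ℕ (FreeMonoid A) u

/-- `x` is a single expansion of the monomial `[u]`: it has the form `[v] * e * [w]`
with `e ∈ E` and `u = v * w`. -/
def IsSingleExpansionOfMonomial {A : Type*} (E : Set (FreeSemiring' A))
    (u : FreeMonoid A) (x : FreeSemiring' A) : Prop :=
  ∃ (v w : FreeMonoid A) (e : FreeSemiring' A),
    e ∈ E ∧ u = v * w ∧ x = mono v * e * mono w

/-- `q` is a single expansion of `p`: one monomial summand of `p` is replaced by
one of its single expansions. -/
def IsSingleExpansion {A : Type*} (E : Set (FreeSemiring' A))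
    (p q : FreeSemiring' A) : Prop :=
  ∃ (u : FreeMonoid A) (s x : FreeSemiring' A),
    p = mono u + s ∧ IsSingleExpansionOfMonomial E u x ∧ q = x + s

/-- `q` is an expansion of `p`: `q` is obtained from `p` by a finite (possibly empty)
sequence of single expansion steps. -/
def IsExpansion {A : Type*} (E : Set (FreeSemiring' A)) :
    FreeSemiring' A → FreeSemiring' A → Prop :=
  Relation.ReflTransGen (IsSingleExpansion E)

/-!
Joinability by expansions is an equivalence because expansion is confluent: parallel expansion,
which expands each monomial summand at most once, has the diamond property. The only critical
case is a monomial `[u]` expanded at two places, `u = v w = v' w'`; since words are equidivisible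
we may assume `v' = v t` and `w = t w'`, and both results expand further to `[v] e [t] e' [w']`.
Joinability is then visibly compatible with `+` and `*` and identifies each `e ∈ E` with `1`,
while every expansion step `[v][w] ↦ [v] e [w]` stays inside any congruence identifying `e`
with `1`.
-/

open Relation

lemma Relation.ReflTransGen.map₂ {α : Type*} {r : α → α → Prop} {f : α → α → α}
    (hl : ∀ {a b} c, r a b → r (f a c) (f b c)) (hr : ∀ a {b c}, r b c → r (f a b) (f a c))
    {a b c d : α} (hab : ReflTransGen r a b) (hcd : ReflTransGen r c d) :
    ReflTransGen r (f a c) (f b d) :=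
  (hab.lift (f · c) fun _ _ h => hl c h).trans (hcd.lift (f b) fun _ _ h => hr b h)

section

variable {A : Type*} {E : Set (FreeSemiring' A)}

lemma mono_mul (u v : FreeMonoid A) : mono (u * v) = mono u * mono v :=
  map_mul (MonoidAlgebra.of ℕ (FreeMonoid A)) u v

lemma mono_one : mono (1 : FreeMonoid A) = 1 :=
  map_one (MonoidAlgebra.of ℕ (FreeMonoid A))

namespace FreeSemiring'

open Classical in
noncomputable def monomialsEquiv : Multiset (FreeMonoid A) ≃+ FreeSemiring' A :=
  Multiset.toFinsupp.trans MonoidAlgebra.coeffAddEquiv.symm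

lemma monomialsEquiv_apply (m : Multiset (FreeMonoid A)) :
    monomialsEquiv m = (m.map mono).sum := by
  classical
  induction m using Multiset.induction with
  | empty => simp
  | cons u m ih =>
    rw [← Multiset.singleton_add, map_add, ih, Multiset.map_add, Multiset.sum_add,
      Multiset.map_singleton, Multiset.sum_singleton, monomialsEquiv, AddEquiv.trans_apply,
      Multiset.toFinsupp_singleton]
    rfl

noncomputable def monomials (p : FreeSemiring' A) : Multiset (FreeMonoid A) :=
  monomialsEquiv.symm p

lemma sum_map_mono_monomials (p : FreeSemiring' A) : ((monomials p).map mono).sum = p := by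
  rw [← monomialsEquiv_apply, monomials, AddEquiv.apply_symm_apply]

lemma eq_of_sum_map_mono_eq {m m' : Multiset (FreeMonoid A)}
    (h : (m.map mono).sum = (m'.map mono).sum) : m = m' := by
  simpa only [← monomialsEquiv_apply, EmbeddingLike.apply_eq_iff_eq] using h

end FreeSemiring'

open FreeSemiring'

lemma FreeMonoid.mul_eq_mul_iff {v w v' w' : FreeMonoid A} :
    v * w = v' * w' ↔
      (∃ t, v' = v * t ∧ w = t * w') ∨ ∃ t, v = v' * t ∧ w' = t * w := by
  simpa only [← toList.injective.eq_iff, toList_mul, toList.surjective.exists]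
    using List.append_eq_append_iff

def IsReflExpansionOfMonomial (E : Set (FreeSemiring' A)) (u : FreeMonoid A)
    (x : FreeSemiring' A) : Prop :=
  x = mono u ∨ IsSingleExpansionOfMonomial E u x

lemma IsReflExpansionOfMonomial.mul_mono_right {u : FreeMonoid A} {x : FreeSemiring' A}
    (h : IsReflExpansionOfMonomial E u x) (w : FreeMonoid A) :
    IsReflExpansionOfMonomial E (u * w) (x * mono w) := by
  rcases h with rfl | ⟨v, w', e, he, rfl, rfl⟩
  · exact .inl (mono_mul u w).symm
  · exact .inr ⟨v, w' * w, e, he, mul_assoc v w' w, by rw [mono_mul, mul_assoc]⟩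

lemma IsReflExpansionOfMonomial.mono_mul_left {u : FreeMonoid A} {x : FreeSemiring' A}
    (h : IsReflExpansionOfMonomial E u x) (v : FreeMonoid A) :
    IsReflExpansionOfMonomial E (v * u) (mono v * x) := by
  rcases h with rfl | ⟨v', w, e, he, rfl, rfl⟩
  · exact .inl (mono_mul v u).symm
  · exact .inr ⟨v * v', w, e, he, (mul_assoc v v' w).symm, by simp only [mono_mul, mul_assoc]⟩

/-- Parallel expansion: every monomial summand of `p` is simultaneously replaced by itself or
by one of its single expansions. -/
def IsParallelExpansion (E : Set (FreeSemiring' A)) (p q : FreeSemiring' A) : Prop :=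
  ∃ m : Multiset (FreeMonoid A × FreeSemiring' A),
    p = (m.map fun a => mono a.1).sum ∧ q = (m.map Prod.snd).sum ∧
      ∀ a ∈ m, IsReflExpansionOfMonomial E a.1 a.2

namespace IsParallelExpansion

lemma zero : IsParallelExpansion E 0 0 := ⟨0, by simp⟩

lemma add {p q p' q' : FreeSemiring' A} (h : IsParallelExpansion E p q)
    (h' : IsParallelExpansion E p' q') : IsParallelExpansion E (p + p') (q + q') := by
  obtain ⟨m, rfl, rfl, hm⟩ := h
  obtain ⟨m', rfl, rfl, hm'⟩ := h'
  refine ⟨m + m', by simp, by simp, fun a ha => ?_⟩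
  rcases Multiset.mem_add.mp ha with ha | ha
  exacts [hm a ha, hm' a ha]

lemma multiset_sum {ι : Type*} {m : Multiset ι} {f g : ι → FreeSemiring' A}
    (h : ∀ i ∈ m, IsParallelExpansion E (f i) (g i)) :
    IsParallelExpansion E (m.map f).sum (m.map g).sum := by
  induction m using Multiset.induction with
  | empty => exact zero
  | cons i m ih =>
    simp only [Multiset.map_cons, Multiset.sum_cons]
    exact (h i (m.mem_cons_self i)).add (ih fun j hj => h j (Multiset.mem_cons_of_mem hj))

lemma of_monomial {u : FreeMonoid A} {x : FreeSemiring' A}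
    (h : IsReflExpansionOfMonomial E u x) : IsParallelExpansion E (mono u) x :=
  ⟨{(u, x)}, by simp, by simp, by simpa using h⟩

lemma refl (p : FreeSemiring' A) : IsParallelExpansion E p p := by
  rw [← sum_map_mono_monomials p]
  exact multiset_sum fun u _ => of_monomial (.inl rfl)

lemma of_isSingleExpansion {p q : FreeSemiring' A} (h : IsSingleExpansion E p q) :
    IsParallelExpansion E p q := by
  obtain ⟨u, s, x, rfl, hx, rfl⟩ := h
  exact (of_monomial (.inr hx)).add (refl s)

lemma mul_mono_right {p q : FreeSemiring' A} (h : IsParallelExpansion E p q) (w : FreeMonoid A) :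
    IsParallelExpansion E (p * mono w) (q * mono w) := by
  obtain ⟨m, rfl, rfl, hm⟩ := h
  simp only [← Multiset.sum_map_mul_right, ← mono_mul]
  exact multiset_sum fun a ha => of_monomial ((hm a ha).mul_mono_right w)

lemma mono_mul_left {p q : FreeSemiring' A} (h : IsParallelExpansion E p q) (v : FreeMonoid A) :
    IsParallelExpansion E (mono v * p) (mono v * q) := by
  obtain ⟨m, rfl, rfl, hm⟩ := h
  simp only [← Multiset.sum_map_mul_left, ← mono_mul]
  exact multiset_sum fun a ha => of_monomial ((hm a ha).mono_mul_left v)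

lemma mul_right {p q : FreeSemiring' A} (h : IsParallelExpansion E p q) (t : FreeSemiring' A) :
    IsParallelExpansion E (p * t) (q * t) := by
  rw [← sum_map_mono_monomials t, ← Multiset.sum_map_mul_left, ← Multiset.sum_map_mul_left]
  exact multiset_sum fun w _ => h.mul_mono_right w

lemma mul_left {p q : FreeSemiring' A} (h : IsParallelExpansion E p q) (t : FreeSemiring' A) :
    IsParallelExpansion E (t * p) (t * q) := by
  rw [← sum_map_mono_monomials t, ← Multiset.sum_map_mul_right, ← Multiset.sum_map_mul_right]
  exact multiset_sum fun v _ => h.mono_mul_left v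

lemma mul_insert {e : FreeSemiring' A} (he : e ∈ E) (p q : FreeSemiring' A) :
    IsParallelExpansion E (p * q) (p * e * q) := by
  have hpq : p * q = ((monomials p).map fun v =>
      ((monomials q).map fun w => mono (v * w)).sum).sum := by
    simp only [mono_mul, Multiset.sum_map_mul_left, Multiset.sum_map_mul_right,
      sum_map_mono_monomials]
  have hpeq : p * e * q = ((monomials p).map fun v =>
      ((monomials q).map fun w => mono v * e * mono w).sum).sum := by
    simp only [Multiset.sum_map_mul_left, Multiset.sum_map_mul_right, sum_map_mono_monomials]
  rw [hpq, hpeq]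
  exact multiset_sum fun v _ => multiset_sum fun w _ =>
    of_monomial (.inr ⟨v, w, e, he, rfl, rfl⟩)

end IsParallelExpansion

lemma IsSingleExpansion.add_left {p q : FreeSemiring' A} (h : IsSingleExpansion E p q)
    (t : FreeSemiring' A) : IsSingleExpansion E (t + p) (t + q) := by
  obtain ⟨u, s, x, rfl, hx, rfl⟩ := h
  exact ⟨u, t + s, x, add_left_comm .., hx, add_left_comm ..⟩

lemma IsExpansion.add_left {p q : FreeSemiring' A} (h : IsExpansion E p q)
    (t : FreeSemiring' A) : IsExpansion E (t + p) (t + q) :=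
  h.lift (t + ·) fun _ _ h => h.add_left t

lemma IsReflExpansionOfMonomial.isExpansion_add {u : FreeMonoid A} {x : FreeSemiring' A}
    (h : IsReflExpansionOfMonomial E u x) (s : FreeSemiring' A) :
    IsExpansion E (mono u + s) (x + s) := by
  rcases h with rfl | hx
  · exact .refl
  · exact .single ⟨u, s, x, rfl, hx, rfl⟩

lemma IsParallelExpansion.isExpansion {p q : FreeSemiring' A} (h : IsParallelExpansion E p q) :
    IsExpansion E p q := by
  obtain ⟨m, rfl, rfl, hm⟩ := h
  induction m using Multiset.induction with
  | empty => exact .refl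
  | cons a m ih =>
    simp only [Multiset.map_cons, Multiset.sum_cons]
    exact ((hm a (m.mem_cons_self a)).isExpansion_add _).trans
      ((ih fun b hb => hm b (Multiset.mem_cons_of_mem hb)).add_left a.2)

lemma reflTransGen_isParallelExpansion :
    ReflTransGen (IsParallelExpansion E) = IsExpansion E := by
  ext p q
  exact ⟨fun h => h.lift' id fun _ _ h => h.isExpansion,
    ReflTransGen.mono (fun _ _ => IsParallelExpansion.of_isSingleExpansion) p q⟩

lemma join_isParallelExpansion_of_overlap {e e' : FreeSemiring' A} (he : e ∈ E) (he' : e' ∈ E)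
    (v t w : FreeMonoid A) :
    Join (IsParallelExpansion E) (mono v * e * mono (t * w)) (mono (v * t) * e' * mono w) := by
  refine ⟨mono v * e * (mono t * e' * mono w), ?_, ?_⟩
  · simpa only [mono_mul, mul_assoc] using
      IsParallelExpansion.mul_insert he' (mono v * e * mono t) (mono w)
  · simpa only [mono_mul, mul_assoc] using
      IsParallelExpansion.mul_insert he (mono v) (mono t * e' * mono w)

lemma IsReflExpansionOfMonomial.join {u : FreeMonoid A} {x y : FreeSemiring' A}
    (hx : IsReflExpansionOfMonomial E u x) (hy : IsReflExpansionOfMonomial E u y) :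
    Join (IsParallelExpansion E) x y := by
  rcases hx with rfl | ⟨v, w, e, he, rfl, rfl⟩
  · exact ⟨y, .of_monomial hy, .refl y⟩
  rcases hy with rfl | ⟨v', w', e', he', huv, rfl⟩
  · exact ⟨_, .refl _, .of_monomial (.inr ⟨v, w, e, he, rfl, rfl⟩)⟩
  rcases FreeMonoid.mul_eq_mul_iff.mp huv with ⟨t, rfl, rfl⟩ | ⟨t, rfl, rfl⟩
  · exact join_isParallelExpansion_of_overlap he he' v t w'
  · exact symm (join_isParallelExpansion_of_overlap he' he v' t w)

lemma IsParallelExpansion.join {p q₁ q₂ : FreeSemiring' A} (h₁ : IsParallelExpansion E p q₁)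
    (h₂ : IsParallelExpansion E p q₂) : Join (IsParallelExpansion E) q₁ q₂ := by
  obtain ⟨m₁, hp₁, rfl, hm₁⟩ := h₁
  obtain ⟨m₂, hp₂, rfl, hm₂⟩ := h₂
  have hfst : m₁.map Prod.fst = m₂.map Prod.fst := eq_of_sum_map_mono_eq <| by
    simpa only [Multiset.map_map, Function.comp_def] using hp₁.symm.trans hp₂
  replace hfst : Multiset.Rel (fun a b => a.1 = b.1) m₁ m₂ :=
    Multiset.rel_map.mp (Multiset.rel_eq.mpr hfst)
  clear hp₁ hp₂
  induction hfst with
  | zero => exact ⟨0, .zero, .zero⟩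
  | @cons a b m₁ m₂ hab _ ih =>
    obtain ⟨d, had, hbd⟩ :=
      (hm₁ a (m₁.mem_cons_self a)).join (hab ▸ hm₂ b (m₂.mem_cons_self b))
    obtain ⟨d', hd₁, hd₂⟩ := ih (fun x hx => hm₁ x (Multiset.mem_cons_of_mem hx))
      (fun x hx => hm₂ x (Multiset.mem_cons_of_mem hx))
    simp only [Multiset.map_cons, Multiset.sum_cons]
    exact ⟨d + d', had.add hd₁, hbd.add hd₂⟩

lemma equivalence_join_isExpansion : Equivalence (Join (IsExpansion E)) := by
  rw [← reflTransGen_isParallelExpansion]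
  refine equivalence_join_reflTransGen fun p q₁ q₂ h₁ h₂ => ?_
  obtain ⟨d, hd₁, hd₂⟩ := h₁.join h₂
  exact ⟨d, .single hd₁, .single hd₂⟩

lemma IsExpansion.add {p q p' q' : FreeSemiring' A} (h : IsExpansion E p q)
    (h' : IsExpansion E p' q') : IsExpansion E (p + p') (q + q') := by
  rw [← reflTransGen_isParallelExpansion] at h h' ⊢
  exact h.map₂ (fun c h => h.add (.refl c)) (fun a _ _ h => (IsParallelExpansion.refl a).add h) h'

lemma IsExpansion.mul {p q p' q' : FreeSemiring' A} (h : IsExpansion E p q)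
    (h' : IsExpansion E p' q') : IsExpansion E (p * p') (q * q') := by
  rw [← reflTransGen_isParallelExpansion] at h h' ⊢
  exact h.map₂ (fun c h => h.mul_right c) (fun a _ _ h => h.mul_left a) h'

def expansionCon (E : Set (FreeSemiring' A)) : RingCon (FreeSemiring' A) where
  r := Join (IsExpansion E)
  iseqv := equivalence_join_isExpansion
  add' := fun ⟨r, hr, hr'⟩ ⟨s, hs, hs'⟩ => ⟨r + s, hr.add hs, hr'.add hs'⟩
  mul' := fun ⟨r, hr, hr'⟩ ⟨s, hs, hs'⟩ => ⟨r * s, hr.mul hs, hr'.mul hs'⟩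

lemma isExpansion_one_of_mem {e : FreeSemiring' A} (he : e ∈ E) : IsExpansion E 1 e :=
  .single ⟨1, 0, e, by rw [mono_one, add_zero], ⟨1, 1, e, he, rfl, by simp [mono_one]⟩,
    (add_zero e).symm⟩

lemma IsExpansion.ringCon_rel {c : RingCon (FreeSemiring' A)} (hc : ∀ e ∈ E, c e 1)
    {p q : FreeSemiring' A} (h : IsExpansion E p q) : c p q := by
  induction h with
  | refl => exact c.refl p
  | tail _ hstep ih =>
    obtain ⟨u, s, x, rfl, ⟨v, w, e, he, rfl, rfl⟩, rfl⟩ := hstep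
    refine c.trans ih (c.add ?_ (c.refl s))
    simpa only [mul_one, mono_mul] using
      c.symm (c.mul (c.mul (c.refl (mono v)) (hc e he)) (c.refl (mono w)))

lemma ringConGen_eq_expansionCon :
    ringConGen (fun a b => a ∈ E ∧ b = 1) = expansionCon E := by
  refine le_antisymm (RingCon.ringConGen_le.mpr ?_) fun p q ⟨r, hp, hq⟩ => ?_
  · rintro e _ ⟨he, rfl⟩
    exact ⟨e, .refl, isExpansion_one_of_mem he⟩
  · have hc : ∀ e ∈ E, ringConGen (fun a b => a ∈ E ∧ b = 1) e 1 :=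
      fun e he => RingCon.le_ringConGen _ _ ⟨he, rfl⟩
    exact RingCon.trans _ (hp.ringCon_rel hc) (RingCon.symm _ (hq.ringCon_rel hc))

end

theorem stmt_0 {A : Type*} (E : Set (FreeSemiring' A)) (p q : FreeSemiring' A) :
    ringConGen (fun a b => a ∈ E ∧ b = 1) p q ↔
      ∃ r : FreeSemiring' A, IsExpansion E p r ∧ IsExpansion E q r := by
  rw [ringConGen_eq_expansionCon]
  rfl
end

section
/- Let n ≥ 2 and m ≥ 1. In the free semiring S on the alphabet Fin n × Fin (n+1) × Fin m, for every generator b_{i,j,k}, the elements (n−1)·1 and (n−1)·1 + b_{i,j,k} are related by the congruence ∼ generated by the row and column equations. -/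
/-- The free semiring on the alphabet `Fin n × Fin (n+1) × Fin m`, realized as the
monoid algebra of the free monoid with natural number coefficients. -/
abbrev GridSemiring (n m : ℕ) := MonoidAlgebra ℕ (FreeMonoid (Fin n × Fin (n + 1) × Fin m))

/-- The generator `b_{i,j,k}`: the monomial given by the single letter `(i,j,k)`. -/
noncomputable def bgen (n m : ℕ) (i : Fin n) (j : Fin (n + 1)) (k : Fin m) :
    GridSemiring n m :=
  MonoidAlgebra.of ℕ (FreeMonoid (Fin n × Fin (n + 1) × Fin m)) (FreeMonoid.of (i, j, k))

/-- The generating pairs of the congruence `∼`: the column equations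
`Σ_i Σ_k b_{i,j,k} ∼ 1` for each `j`, and the row equations
`Σ_j Σ_k b_{i,j,k} ∼ 1` for each `i`. -/
def gridRel (n m : ℕ) : GridSemiring n m → GridSemiring n m → Prop := fun a b =>
  b = 1 ∧
    ((∃ j : Fin (n + 1), a = ∑ i : Fin n, ∑ k : Fin m, bgen n m i j k) ∨
     (∃ i : Fin n, a = ∑ j : Fin (n + 1), ∑ k : Fin m, bgen n m i j k))

/-! Modulo `∼`, the entries `D i x = Σ_k b_{i,x,k}` of an `n × (n+1)` array have all row and
column sums `1`, and `A = b_{i₀,x₀,k}` is a summand of `D i₀ x₀ = A + δ`. Column `x₀` gives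
`A + J = 1` for `J = δ + Σ_{i ≠ i₀} D i x₀`, so every entry splits as `D i x = D i x A + D i x J`.
Choose a row `r ≠ i₀` and a column `c ≠ x₀`, and sum the `n - 1` rows other than `r`, splitting
the entries in column `c`. As row `r` and column `c` both sum to `1`,
`A + Σ_{i ≠ r} D i c A = A + Σ_{x ≠ c} D r x A`; exchanging the two, with the copy of `A` taken
from inside `D i₀ x₀`, turns the sum into `(n - 1) J + n A`: `J` once per row other than `r`
and `A` once per column other than `c`. Hence `n - 1 = (n - 1) (J + A) + A = (n - 1) + A`. -/

open Finset

section RowColumnSums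

variable {Q I X : Type*} [Semiring Q] [Fintype I] [Fintype X] [DecidableEq I] [DecidableEq X]
  {D : I → X → Q}

theorem add_sum_erase_col_mul_eq_add_sum_erase_row_mul {r : I} {c : X}
    (hrow : ∑ x, D r x = 1) (hcol : ∑ i, D i c = 1) (Y : Q) :
    Y + ∑ i ∈ univ.erase r, D i c * Y = Y + ∑ x ∈ univ.erase c, D r x * Y := by
  have hr : ∑ x ∈ univ.erase c, D r x * Y + D r c * Y = Y := by
    rw [sum_erase_add _ _ (mem_univ c), ← sum_mul, hrow, one_mul]
  have hc : ∑ i ∈ univ.erase r, D i c * Y + D r c * Y = Y := by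
    rw [sum_erase_add _ _ (mem_univ r), ← sum_mul, hcol, one_mul]
  calc Y + ∑ i ∈ univ.erase r, D i c * Y
      = (∑ x ∈ univ.erase c, D r x * Y + D r c * Y) + ∑ i ∈ univ.erase r, D i c * Y := by
        rw [hr]
    _ = (∑ i ∈ univ.erase r, D i c * Y + D r c * Y) + ∑ x ∈ univ.erase c, D r x * Y := by
        abel
    _ = Y + ∑ x ∈ univ.erase c, D r x * Y := by rw [hc]

theorem card_erase_nsmul_one_eq_nsmul_add_nsmul {A J δ : Q} {i₀ r : I} {x₀ c : X}
    (hrow : ∀ i, ∑ x, D i x = 1) (hcol : ∀ x, ∑ i, D i x = 1) (hAJ : A + J = 1)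
    (hi₀ : i₀ ≠ r) (hx₀ : x₀ ≠ c) (hsplit : D i₀ x₀ = A + δ) :
    #(univ.erase r) • (1 : Q) = #(univ.erase r) • J + #(univ.erase c) • A := by
  set S := ∑ i ∈ univ.erase r, ∑ x ∈ univ.erase c, D i x with hS
  have hsplitAJ : ∀ i x, D i x = D i x * A + D i x * J := fun i x => by
    rw [← mul_add, hAJ, mul_one]
  obtain ⟨E, hSE⟩ : ∃ E, S = A + E := by
    refine ⟨δ + ∑ x ∈ (univ.erase c).erase x₀, D i₀ x +
      ∑ i ∈ (univ.erase r).erase i₀, ∑ x ∈ univ.erase c, D i x, ?_⟩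
    rw [hS, ← add_sum_erase _ _ (mem_erase.mpr ⟨hi₀, mem_univ i₀⟩),
      ← add_sum_erase _ _ (mem_erase.mpr ⟨hx₀, mem_univ x₀⟩), hsplit]
    abel
  have hrows : #(univ.erase r) • (1 : Q) = S + ∑ i ∈ univ.erase r, D i c := by
    rw [hS, ← sum_add_distrib, ← sum_const]
    exact sum_congr rfl fun i _ => by rw [sum_erase_add _ _ (mem_univ c), hrow]
  have hblock : S + ∑ i ∈ univ.erase r, D i c * J
      = ∑ i ∈ univ.erase r, ∑ x ∈ univ.erase c, D i x * A + #(univ.erase r) • J := by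
    rw [hS, ← sum_const, ← sum_add_distrib, ← sum_add_distrib]
    refine sum_congr rfl fun i _ => ?_
    have hJ : J = ∑ x ∈ univ.erase c, D i x * J + D i c * J := by
      rw [sum_erase_add _ _ (mem_univ c), ← sum_mul, hrow, one_mul]
    conv_rhs => rw [hJ, ← add_assoc, ← sum_add_distrib]
    simp only [← hsplitAJ]
  have hcols : ∑ i ∈ univ.erase r, ∑ x ∈ univ.erase c, D i x * A
      + ∑ x ∈ univ.erase c, D r x * A = #(univ.erase c) • A := by
    rw [sum_comm, ← sum_add_distrib, ← sum_const]
    refine sum_congr rfl fun x _ => ?_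
    rw [sum_erase_add _ _ (mem_univ r), ← sum_mul, hcol, one_mul]
  calc #(univ.erase r) • (1 : Q)
      = E + ∑ i ∈ univ.erase r, D i c * J + (A + ∑ i ∈ univ.erase r, D i c * A) := by
        rw [hrows, hSE, sum_congr rfl fun i _ => hsplitAJ i c, sum_add_distrib]
        abel
    _ = S + ∑ i ∈ univ.erase r, D i c * J + ∑ x ∈ univ.erase c, D r x * A := by
        rw [add_sum_erase_col_mul_eq_add_sum_erase_row_mul (hrow r) (hcol c), hSE]
        abel
    _ = #(univ.erase r) • J + #(univ.erase c) • A := by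
        rw [hblock, add_right_comm, hcols, add_comm]

theorem card_sub_one_nsmul_one_add_eq {A δ : Q} {i₀ r : I} {x₀ c : X}
    (hrow : ∀ i, ∑ x, D i x = 1) (hcol : ∀ x, ∑ i, D i x = 1)
    (hcard : Fintype.card X = Fintype.card I + 1)
    (hi₀ : i₀ ≠ r) (hx₀ : x₀ ≠ c) (hsplit : D i₀ x₀ = A + δ) :
    (Fintype.card I - 1) • (1 : Q) + A = (Fintype.card I - 1) • 1 := by
  set J := δ + ∑ i ∈ univ.erase i₀, D i x₀
  have hAJ : A + J = 1 := by
    rw [← add_assoc, ← hsplit, add_sum_erase _ (fun i => D i x₀) (mem_univ i₀), hcol]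
  have key := card_erase_nsmul_one_eq_nsmul_add_nsmul hrow hcol hAJ hi₀ hx₀ hsplit
  have hpos : 0 < Fintype.card I := Fintype.card_pos_iff.mpr ⟨r⟩
  rw [card_erase_of_mem (mem_univ r), card_erase_of_mem (mem_univ c), card_univ, card_univ,
    hcard, Nat.add_sub_cancel, ← Nat.sub_add_cancel hpos, succ_nsmul, Nat.add_sub_cancel,
    ← add_assoc, ← nsmul_add, add_comm J, hAJ] at key
  exact key.symm

end RowColumnSums

theorem stmt_4_general (n m : ℕ) (hn : 2 ≤ n)
    (i : Fin n) (j : Fin (n + 1)) (k : Fin m) :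
    ringConGen (gridRel n m) ((n - 1) • (1 : GridSemiring n m))
      ((n - 1) • (1 : GridSemiring n m) + bgen n m i j k) := by
  set c := ringConGen (gridRel n m)
  have hrel : ∀ a, gridRel n m a 1 → c.mk' a = 1 := fun a h => by
    rw [← map_one c.mk']
    exact c.eq.mpr (RingConGen.Rel.of _ _ h)
  let D : Fin n → Fin (n + 1) → c.Quotient := fun i x => ∑ k, c.mk' (bgen n m i x k)
  have hrow : ∀ i, ∑ x, D i x = 1 := fun i => by
    simpa only [map_sum] using hrel _ ⟨rfl, Or.inr ⟨i, rfl⟩⟩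
  have hcol : ∀ x, ∑ i, D i x = 1 := fun x => by
    simpa only [map_sum] using hrel _ ⟨rfl, Or.inl ⟨x, rfl⟩⟩
  have : Nontrivial (Fin n) := Fin.nontrivial_iff_two_le.mpr hn
  have : Nontrivial (Fin (n + 1)) := Fin.nontrivial_iff_two_le.mpr (by omega)
  obtain ⟨i', hi'⟩ := exists_ne i
  obtain ⟨j', hj'⟩ := exists_ne j
  have h := card_sub_one_nsmul_one_add_eq hrow hcol (by simp) hi'.symm hj'.symm
    (add_sum_erase _ _ (mem_univ k)).symm
  rw [Fintype.card_fin] at h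
  refine c.eq.mp ?_
  simpa only [RingCon.coe_add, RingCon.coe_nsmul, RingCon.coe_one, RingCon.coe_mk'] using h.symm

theorem stmt_4 (n m : ℕ) (hn : 2 ≤ n) (hm : 1 ≤ m)
    (i : Fin n) (j : Fin (n + 1)) (k : Fin m) :
    ringConGen (gridRel n m) ((n - 1) • (1 : GridSemiring n m))
      ((n - 1) • (1 : GridSemiring n m) + bgen n m i j k) :=
  stmt_4_general n m hn i j k
end

section
/- Let n ≥ 2 and m ≥ 1. In the free semiring S on the alphabet Fin n × Fin (n+1) × Fin m, the elements (n−1)·1 and n·1 are related by the congruence ∼ generated by the row and column equations. -/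
/-! In the quotient semiring the elements `a i j = Σ_k b_{i,j,k}` form an `n × (n+1)` matrix whose
row and column sums are all `1`. Splitting off the row and the column through an entry `s` gives a
`2 × 2` block matrix `[[s, r], [t, x]]` with row sums `1, n - 1` and column sums `1, n`; multiplying
these relations by `s` on the right and regrouping shows that `s` is absorbed:
`(n - 1)·1 + s = (n - 1)·1`. Summing over a column, whose entries add up to `1`, gives
`(n - 1)·1 + 1 = (n - 1)·1`. -/

open Finset

section SemiringMatrix

variable {Q : Type*} [Semiring Q]

theorem nsmul_one_add_eq_self_of_block_sums (k : ℕ) {s r t x : Q} (hsr : s + r = 1)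
    (hst : s + t = 1) (htx : t + x = (k + 1) • 1) (hrx : r + x = (k + 2) • 1) :
    (k + 1) • (1 : Q) + s = (k + 1) • 1 := by
  have pump : (k + 2) • s + t = (k + 1) • s + t :=
    calc (k + 2) • s + t = (r + x) * s + t * (s + t) := by
          rw [hrx, hst, smul_one_mul, mul_one]
      _ = (t + x) * s + r * s + t * t := by simp only [add_mul, mul_add]; abel
      _ = k • s + s * (s + t) + r * s + t * t := by
          rw [htx, hst, smul_one_mul, mul_one, succ_nsmul]
      _ = k • s + ((s + r) * s + (s + t) * t) := by simp only [add_mul, mul_add]; abel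
      _ = (k + 1) • s + t := by rw [hsr, hst, one_mul, one_mul, succ_nsmul, add_assoc]
  calc (k + 1) • (1 : Q) + s = ((k + 2) • s + t) + k • t := by rw [← hst]; module
    _ = ((k + 1) • s + t) + k • t := by rw [pump]
    _ = (k + 1) • 1 := by rw [← hst]; module

variable {ι κ : Type*} [Fintype ι] [Fintype κ] {a : ι → κ → Q}

theorem nsmul_one_add_entry_eq_self (k : ℕ) (hι : Fintype.card ι = k + 2)
    (hκ : Fintype.card κ = k + 3) (hrow : ∀ i, ∑ j, a i j = 1) (hcol : ∀ j, ∑ i, a i j = 1)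
    (v : ι) (w : κ) : (k + 1) • (1 : Q) + a v w = (k + 1) • 1 := by
  classical
  refine nsmul_one_add_eq_self_of_block_sums k
    (r := ∑ j ∈ univ.erase w, a v j) (t := ∑ i ∈ univ.erase v, a i w)
    (x := ∑ i ∈ univ.erase v, ∑ j ∈ univ.erase w, a i j) ?_ ?_ ?_ ?_
  · rw [add_sum_erase _ _ (mem_univ w), hrow]
  · rw [add_sum_erase _ (a · w) (mem_univ v), hcol]
  · rw [← sum_add_distrib,
      sum_congr rfl fun i _ => (add_sum_erase _ (a i) (mem_univ w)).trans (hrow i)]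
    simp only [sum_const, card_erase_of_mem (mem_univ v), card_univ, hι, Nat.add_one_sub_one]
  · rw [sum_comm, ← sum_add_distrib,
      sum_congr rfl fun j _ => (add_sum_erase _ (a · j) (mem_univ v)).trans (hcol j)]
    simp only [sum_const, card_erase_of_mem (mem_univ w), card_univ, hκ, Nat.add_one_sub_one]

theorem card_sub_one_nsmul_one_eq_of_row_col_sums (hι : 2 ≤ Fintype.card ι)
    (hκ : Fintype.card κ = Fintype.card ι + 1) (hrow : ∀ i, ∑ j, a i j = 1)
    (hcol : ∀ j, ∑ i, a i j = 1) : (Fintype.card ι - 1) • (1 : Q) = Fintype.card ι • 1 := by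
  obtain ⟨k, hk⟩ := Nat.exists_eq_add_of_le' hι
  obtain ⟨w⟩ : Nonempty κ := Fintype.card_pos_iff.mp (by omega)
  have absorb : (k + 1) • (1 : Q) + ∑ i, a i w = (k + 1) • 1 :=
    sum_induction _ (fun y => (k + 1) • (1 : Q) + y = (k + 1) • 1)
      (fun y z hy hz => by rw [← add_assoc, hy, hz]) (add_zero _)
      (fun i _ => nsmul_one_add_entry_eq_self k hk (by omega) hrow hcol i w)
  rw [hcol, ← succ_nsmul] at absorb
  rw [hk]
  exact absorb.symm

end SemiringMatrix

theorem stmt_5_general (n m : ℕ) (hn : 2 ≤ n) :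
    ringConGen (gridRel n m) ((n - 1) • (1 : GridSemiring n m))
      (n • (1 : GridSemiring n m)) := by
  set c := ringConGen (gridRel n m)
  have hrow (i : Fin n) : ∑ j, c.mk' (∑ k, bgen n m i j k) = 1 := by
    rw [← map_sum, ← map_one c.mk']
    exact c.eq.mpr (RingConGen.Rel.of _ _ ⟨rfl, Or.inr ⟨i, rfl⟩⟩)
  have hcol (j : Fin (n + 1)) : ∑ i, c.mk' (∑ k, bgen n m i j k) = 1 := by
    rw [← map_sum, ← map_one c.mk']
    exact c.eq.mpr (RingConGen.Rel.of _ _ ⟨rfl, Or.inl ⟨j, rfl⟩⟩)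
  have h := card_sub_one_nsmul_one_eq_of_row_col_sums (by simpa using hn) (by simp) hrow hcol
  simp only [Fintype.card_fin, ← map_one c.mk', ← map_nsmul] at h
  exact c.eq.mp h

theorem stmt_5 (n m : ℕ) (hn : 2 ≤ n) (hm : 1 ≤ m) :
    ringConGen (gridRel n m) ((n - 1) • (1 : GridSemiring n m))
      (n • (1 : GridSemiring n m)) :=
  stmt_5_general n m hn
end

section
/- Let L be a first-order language and M a nonempty L-structure. Let n ≥ 1 and let φ : [2n] → [2n] be a bracketing involution. If M has bracket terms b₁,…,b₂ₙ with respect to φ, then M has n×(n+1)×3-terms. -/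
/-!
Each pair `{l, φ l}` of a bracketing involution encloses an interval that `φ` maps to itself
without fixed points, so the interval has even length and `φ` pairs every even index `2i` with an
odd index `2π(i) - 1`, for a permutation `π` of `[n]`. Put
`f_i = b_{2i}(x_{i,1}, x_{π(i),2}, x_{i+1,3})`,
`g_j = b_{2j-1}(x_{j,1}, x_{π⁻¹(j),2}, x_{j-1,3})` for `j ≤ n` and `g_{n+1} = b_{2n}`.
A `y` in column `k` that occurs in both `f_i` and `g_j` is handled by the bracket identity for
column `k`; if it occurs in only one of them, that one is the projection `b_1` or `b_{2n}`, which
ignores it.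
-/

open FirstOrder Language

/-- `M` has `n×(n+1)×m`-terms: idempotent `(n+1)·m`-ary term operations `f i`
(variables indexed by pairs `(j,k) ∈ Fin (n+1) × Fin m`) for `i ∈ Fin n`, and
idempotent `n·m`-ary term operations `g j` (variables indexed by pairs
`(i,k) ∈ Fin n × Fin m`) for `j ∈ Fin (n+1)`, such that `f i` applied to the tuple
which is `y` at position `(j,k)` and `x` elsewhere equals `g j` applied to the tuple
which is `y` at position `(i,k)` and `x` elsewhere. -/
def HasGridTerms (L : Language) (M : Type*) [L.Structure M] (n m : ℕ) : Prop :=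
  ∃ (f : Fin n → L.Term (Fin (n + 1) × Fin m)) (g : Fin (n + 1) → L.Term (Fin n × Fin m)),
    (∀ (i : Fin n) (x : M), (f i).realize (fun _ => x) = x) ∧
    (∀ (j : Fin (n + 1)) (x : M), (g j).realize (fun _ => x) = x) ∧
    (∀ (i : Fin n) (j : Fin (n + 1)) (k : Fin m) (x y : M),
      (f i).realize (fun p => if p = (j, k) then y else x) =
      (g j).realize (fun p => if p = (i, k) then y else x))

/-- `φ : [2n] → [2n]` is a bracketing involution: a self-inverse bijection without
fixed points such that `i < j < φ(i)` implies `i < φ(j) < φ(i)`. (Indices range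
over `1,…,2n`.) -/
def IsBracketingInvolution (n : ℕ) (φ : ℕ → ℕ) : Prop :=
  (∀ i, 1 ≤ i → i ≤ 2 * n → 1 ≤ φ i ∧ φ i ≤ 2 * n) ∧
  (∀ i, 1 ≤ i → i ≤ 2 * n → φ (φ i) = i) ∧
  (∀ i, 1 ≤ i → i ≤ 2 * n → φ i ≠ i) ∧
  (∀ i j, 1 ≤ i → j ≤ 2 * n → i < j → j < φ i → i < φ j ∧ φ j < φ i)

/-- `b 1, …, b (2n)` are bracket terms for `M` with respect to `φ`: idempotent ternary
term operations satisfying `b₁(x,y,z) = x`, `b₂ₙ(x,y,z) = z`,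
`b₂ᵢ(y,x,x) = b₂ᵢ₋₁(y,x,x)`, `b₂ᵢ(x,x,y) = b₂ᵢ₊₁(x,x,y)` (whenever the indices lie
in `[2n]`), and `bᵢ(x,y,x) = b_{φ(i)}(x,y,x)`. -/
def HasBracketTerms (L : Language) (M : Type*) [L.Structure M] (n : ℕ) (φ : ℕ → ℕ)
    (b : ℕ → L.Term (Fin 3)) : Prop :=
  (∀ i, 1 ≤ i → i ≤ 2 * n → ∀ x : M, (b i).realize (fun _ => x) = x) ∧
  (∀ x y z : M, (b 1).realize ![x, y, z] = x) ∧
  (∀ x y z : M, (b (2 * n)).realize ![x, y, z] = z) ∧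
  (∀ i, 1 ≤ i → i ≤ n → ∀ x y : M,
    (b (2 * i)).realize ![y, x, x] = (b (2 * i - 1)).realize ![y, x, x]) ∧
  (∀ i, 1 ≤ i → 2 * i + 1 ≤ 2 * n → ∀ x y : M,
    (b (2 * i)).realize ![x, x, y] = (b (2 * i + 1)).realize ![x, x, y]) ∧
  (∀ i, 1 ≤ i → i ≤ 2 * n → ∀ x y : M,
    (b i).realize ![x, y, x] = (b (φ i)).realize ![x, y, x])


namespace FirstOrder.Language.Term

variable {L : Language} {M : Type*} [L.Structure M] {α β : Type*} [DecidableEq α]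
  [DecidableEq β]

theorem realize_relabel_update_diag (t : L.Term β) (c : β → α) (j : α) (k : β) (x y : M) :
    (t.relabel fun k => (c k, k)).realize (Function.update (fun _ => x) (j, k) y) =
      if c k = j then t.realize (Function.update (fun _ => x) k y) else t.realize fun _ => x := by
  rw [realize_relabel]
  split_ifs <;>
  · congr 1
    funext k'
    simp only [Function.comp_apply, Function.update_apply, Prod.ext_iff]
    grind

end FirstOrder.Language.Term

/-- The terms are `F i` and `G j` with their `k`-th variable renamed to `(cf i k, k)` and
`(cg j k, k)` respectively. -/
theorem hasGridTerms_of_relabel {L : Language} {M : Type*} [L.Structure M] {n m : ℕ}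
    (F : Fin n → L.Term (Fin m)) (G : Fin (n + 1) → L.Term (Fin m))
    (cf : Fin n → Fin m → Fin (n + 1)) (cg : Fin (n + 1) → Fin m → Fin n)
    (hF : ∀ i (x : M), (F i).realize (fun _ => x) = x)
    (hG : ∀ j (x : M), (G j).realize (fun _ => x) = x)
    (hcfg : ∀ i k, cg (cf i k) k = i)
    (hFG : ∀ i k (x y : M), (F i).realize (Function.update (fun _ => x) k y) =
      (G (cf i k)).realize (Function.update (fun _ => x) k y))
    (hG_of_ne : ∀ j k (x y : M), cf (cg j k) k ≠ j →
      (G j).realize (Function.update (fun _ => x) k y) = x) :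
    HasGridTerms L M n m := by
  refine ⟨fun i => (F i).relabel fun k => (cf i k, k),
    fun j => (G j).relabel fun k => (cg j k, k),
    fun i x => (Term.realize_relabel ..).trans (hF i x),
    fun j x => (Term.realize_relabel ..).trans (hG j x), fun i j k x y => ?_⟩
  have ite_eq_update {γ : Type} [DecidableEq γ] (a : γ) :
      (fun p => if p = a then y else x) = Function.update (fun _ => x) a y :=
    funext fun p => by rw [Function.update_apply]
  simp only [ite_eq_update, Term.realize_relabel_update_diag, hF, hG]
  by_cases hij : cf i k = j
  · subst hij
    simp [hcfg, hFG]
  · by_cases hji : cg j k = i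
    · subst hji
      simp [hij, hG_of_ne _ _ _ _ hij]
    · simp [hij, hji]

namespace IsBracketingInvolution

variable {n : ℕ} {φ : ℕ → ℕ} {l : ℕ}

theorem one_le_apply (hφ : IsBracketingInvolution n φ) (hl : 1 ≤ l) (hl' : l ≤ 2 * n) :
    1 ≤ φ l :=
  (hφ.1 l hl hl').1

theorem apply_le (hφ : IsBracketingInvolution n φ) (hl : 1 ≤ l) (hl' : l ≤ 2 * n) :
    φ l ≤ 2 * n :=
  (hφ.1 l hl hl').2

theorem apply_apply (hφ : IsBracketingInvolution n φ) (hl : 1 ≤ l) (hl' : l ≤ 2 * n) :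
    φ (φ l) = l :=
  hφ.2.1 l hl hl'

theorem apply_ne (hφ : IsBracketingInvolution n φ) (hl : 1 ≤ l) (hl' : l ≤ 2 * n) :
    φ l ≠ l :=
  hφ.2.2.1 l hl hl'

theorem even_sub_sub_one (hφ : IsBracketingInvolution n φ) (hl : 1 ≤ l)
    (hφl : φ l ≤ 2 * n) : Even (φ l - l - 1) := by
  rw [← Nat.card_Ioo, ← ZMod.natCast_eq_zero_iff_even, Finset.card_eq_sum_ones, Nat.cast_sum,
    Nat.cast_one]
  refine Finset.sum_involution (fun c _ => φ c) (fun _ _ => rfl) (fun c hc _ => ?_)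
    (fun c hc => ?_) (fun c hc => ?_) <;> rw [Finset.mem_Ioo] at hc
  · exact hφ.apply_ne (by omega) (by omega)
  · exact Finset.mem_Ioo.2 (hφ.2.2.2 l c hl (by omega) hc.1 hc.2)
  · exact hφ.apply_apply (by omega) (by omega)

theorem odd_add_apply (hφ : IsBracketingInvolution n φ) (hl : 1 ≤ l) (hl' : l ≤ 2 * n) :
    Odd (l + φ l) := by
  have h₁ := hφ.even_sub_sub_one hl (hφ.apply_le hl hl')
  have h₂ := hφ.even_sub_sub_one (hφ.one_le_apply hl hl') (by rwa [hφ.apply_apply hl hl'])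
  rw [hφ.apply_apply hl hl'] at h₂
  have := hφ.apply_ne hl hl'
  rw [Nat.even_iff] at h₁ h₂
  rw [Nat.odd_iff]
  omega

def partner (hφ : IsBracketingInvolution n φ) : Fin n ≃ Fin n where
  toFun i := ⟨(φ (2 * i + 2) - 1) / 2, by
    have := i.2
    have := hφ.apply_le (l := 2 * i + 2) (by omega) (by omega)
    omega⟩
  invFun j := ⟨(φ (2 * j + 1) - 2) / 2, by
    have := j.2
    have := hφ.apply_le (l := 2 * j + 1) (by omega) (by omega)
    omega⟩
  left_inv i := by
    have := Nat.odd_iff.1 (hφ.odd_add_apply (l := 2 * i + 2) (by omega) (by omega))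
    have := hφ.one_le_apply (l := 2 * i + 2) (by omega) (by omega)
    ext
    simp only
    rw [show 2 * ((φ (2 * i + 2) - 1) / 2) + 1 = φ (2 * i + 2) by omega,
      hφ.apply_apply (by omega) (by omega)]
    omega
  right_inv j := by
    have := Nat.odd_iff.1 (hφ.odd_add_apply (l := 2 * j + 1) (by omega) (by omega))
    have := hφ.one_le_apply (l := 2 * j + 1) (by omega) (by omega)
    have := hφ.apply_ne (l := 2 * j + 1) (by omega) (by omega)
    ext
    simp only
    rw [show 2 * ((φ (2 * j + 1) - 2) / 2) + 2 = φ (2 * j + 1) by omega,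
      hφ.apply_apply (by omega) (by omega)]
    omega

theorem apply_two_mul_add_two (hφ : IsBracketingInvolution n φ) (i : Fin n) :
    φ (2 * i + 2) = 2 * hφ.partner i + 1 := by
  have := Nat.odd_iff.1 (hφ.odd_add_apply (l := 2 * i + 2) (by omega) (by omega))
  have := hφ.one_le_apply (l := 2 * i + 2) (by omega) (by omega)
  simp only [partner, Equiv.coe_fn_mk]
  omega

end IsBracketingInvolution

namespace BracketGrid

variable {L : Language} {M : Type*} [L.Structure M] {n : ℕ} {φ : ℕ → ℕ}
  {b : ℕ → L.Term (Fin 3)}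

theorem update_const_zero (x y : M) :
    Function.update (fun _ => x) (0 : Fin 3) y = ![y, x, x] := by
  funext k
  fin_cases k <;> rfl

theorem update_const_one (x y : M) :
    Function.update (fun _ => x) (1 : Fin 3) y = ![x, y, x] := by
  funext k
  fin_cases k <;> rfl

theorem update_const_two (x y : M) :
    Function.update (fun _ => x) (2 : Fin 3) y = ![x, x, y] := by
  funext k
  fin_cases k <;> rfl

/- With 0-based indices `f i = b (2i+2)` and `g j = b (2j+1)` for `j < n`, `g n = b (2n)`;
the `k`-th argument of `f i` is the variable `(fCoord i k, k)`, that of `g j` is `(gCoord j k, k)`.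
The third argument of `g 0 = b 1` and the first two of `g n = b (2n)` are ignored by these
projections, so their coordinates are arbitrary. -/
def fCoord (hφ : IsBracketingInvolution n φ) (i : Fin n) : Fin 3 → Fin (n + 1) :=
  ![i.castSucc, (hφ.partner i).castSucc, i.succ]

def gCoord (hn : 1 ≤ n) (hφ : IsBracketingInvolution n φ) : Fin (n + 1) → Fin 3 → Fin n :=
  Fin.lastCases (fun _ => ⟨n - 1, by omega⟩) fun j =>
    ![j, hφ.partner.symm j, ⟨j - 1, by omega⟩]

def gTerm (n : ℕ) (b : ℕ → L.Term (Fin 3)) : Fin (n + 1) → L.Term (Fin 3) :=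
  Fin.lastCases (b (2 * n)) fun j => b (2 * j + 1)

theorem gCoord_fCoord (hn : 1 ≤ n) (hφ : IsBracketingInvolution n φ) (i : Fin n) (k : Fin 3) :
    gCoord hn hφ (fCoord hφ i k) k = i := by
  fin_cases k
  · simp [fCoord, gCoord]
  · simp [fCoord, gCoord]
  · rcases Fin.eq_castSucc_or_eq_last i.succ with ⟨j, hj⟩ | hj <;>
      simp only [fCoord, gCoord, hj] <;>
      simp [Fin.ext_iff] at hj ⊢ <;>
      omega

theorem realize_gTerm_fCoord (hφ : IsBracketingInvolution n φ)
    (hb : HasBracketTerms L M n φ b) (i : Fin n) (k : Fin 3) (x y : M) :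
    (b (2 * i + 2)).realize (Function.update (fun _ => x) k y) =
      (gTerm n b (fCoord hφ i k)).realize (Function.update (fun _ => x) k y) := by
  obtain ⟨-, -, -, hodd_even, heven_odd, hφb⟩ := hb
  match k with
  | 0 =>
    simp only [fCoord, gTerm, update_const_zero, Matrix.cons_val_zero, Fin.lastCases_castSucc]
    convert hodd_even (i + 1) (by omega) i.2 x y using 3 <;> omega
  | 1 =>
    simp only [fCoord, gTerm, update_const_one, Matrix.cons_val_one, Matrix.cons_val_zero,
      Fin.lastCases_castSucc, ← hφ.apply_two_mul_add_two]
    exact hφb _ (by omega) (by omega) x y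
  | 2 =>
    simp only [fCoord, gTerm, update_const_two, Matrix.cons_val_two, Matrix.tail_cons,
      Matrix.head_cons]
    rcases Fin.eq_castSucc_or_eq_last i.succ with ⟨j, hj⟩ | hj <;>
      rw [hj] <;> simp only [Fin.ext_iff, Fin.val_succ, Fin.val_castSucc, Fin.val_last] at hj
    · rw [Fin.lastCases_castSucc]
      convert heven_odd (i + 1) (by omega) (by omega) x y using 3 <;> omega
    · rw [Fin.lastCases_last, show 2 * (i : ℕ) + 2 = 2 * n by omega]

theorem realize_gTerm_const (hn : 1 ≤ n) (hb : HasBracketTerms L M n φ b) (j : Fin (n + 1))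
    (x : M) : (gTerm n b j).realize (fun _ => x) = x := by
  induction j using Fin.lastCases with
  | last => simpa [gTerm] using hb.1 (2 * n) (by omega) le_rfl x
  | cast j => simpa [gTerm] using hb.1 (2 * j + 1) (by omega) (by omega) x

theorem realize_gTerm_of_ne (hn : 1 ≤ n) (hφ : IsBracketingInvolution n φ)
    (hb : HasBracketTerms L M n φ b) (j : Fin (n + 1)) (k : Fin 3) (x y : M)
    (h : fCoord hφ (gCoord hn hφ j k) k ≠ j) :
    (gTerm n b j).realize (Function.update (fun _ => x) k y) = x := by
  obtain ⟨-, hfirst, hlast, -, -, -⟩ := hb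
  induction j using Fin.lastCases with
  | last =>
    simp only [gTerm, Fin.lastCases_last]
    match k with
    | 0 => rw [update_const_zero, hlast]
    | 1 => rw [update_const_one, hlast]
    | 2 =>
      refine absurd ?_ h
      simp [fCoord, gCoord, Fin.ext_iff]
      omega
  | cast j =>
    simp only [gTerm, Fin.lastCases_castSucc]
    match k with
    | 0 => simp [fCoord, gCoord] at h
    | 1 => simp [fCoord, gCoord] at h
    | 2 =>
      simp [fCoord, gCoord, Fin.ext_iff] at h
      rw [update_const_two, show (j : ℕ) = 0 by omega, hfirst]

end BracketGrid

theorem stmt_7_general {L : Language} (M : Type*) [L.Structure M]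
    (n : ℕ) (hn : 1 ≤ n) (φ : ℕ → ℕ) (hφ : IsBracketingInvolution n φ)
    (b : ℕ → L.Term (Fin 3)) (hb : HasBracketTerms L M n φ b) :
    HasGridTerms L M n 3 :=
  hasGridTerms_of_relabel (fun i => b (2 * i + 2)) (BracketGrid.gTerm n b)
    (BracketGrid.fCoord hφ) (BracketGrid.gCoord hn hφ)
    (fun i => hb.1 _ (by omega) (by omega)) (BracketGrid.realize_gTerm_const hn hb)
    (BracketGrid.gCoord_fCoord hn hφ) (BracketGrid.realize_gTerm_fCoord hφ hb)
    (BracketGrid.realize_gTerm_of_ne hn hφ hb)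

theorem stmt_7 {L : Language} (M : Type*) [L.Structure M] [Nonempty M]
    (n : ℕ) (hn : 1 ≤ n) (φ : ℕ → ℕ) (hφ : IsBracketingInvolution n φ)
    (b : ℕ → L.Term (Fin 3)) (hb : HasBracketTerms L M n φ b) :
    HasGridTerms L M n 3 :=
  stmt_7_general M n hn φ hφ b hb
end

section
/- Let K be a field and M a nontrivial K-module (there exists y ∈ M with y ≠ 0). Let m₁, m₂ ≥ 1. Then there do not exist coefficients a : Fin (m₁+m₂) → K, b : Fin m₁ → K, c : Fin m₂ → K such that the linear-combination operations f(x) = Σᵢ aᵢ • xᵢ on M^(m₁+m₂), g₁(x) = Σᵢ bᵢ • xᵢ on M^(m₁), g₂(x) = Σᵢ cᵢ • xᵢ on M^(m₂) are all idempotent and satisfy, for all x, y ∈ M: for each 1 ≤ i ≤ m₁, f applied to the tuple with y in position i and x in all other positions equals g₁ applied to the tuple with y in position i and x elsewhere; and for each 1 ≤ i ≤ m₂, f applied to the tuple with y in position m₁+i and x elsewhere equals g₂ applied to the tuple with y in position i and x elsewhere. -/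
/-!
Evaluating a linear combination at the tuple with `y ≠ 0` in one position and `0` elsewhere
reads off the coefficient of that position, so the identities force `a` to be the concatenation
of `b` and `c`, while idempotence forces each coefficient family to sum to `1`.
Then `1 = ∑ a = ∑ b + ∑ c = 1 + 1`, which is absurd.
-/

section LinearCombination

variable {R M ι κ : Type*} [DivisionRing R] [AddCommGroup M] [Module R M]
  [Fintype ι] [Fintype κ] {y : M}

lemma sum_eq_one_of_sum_smul_eq_self (hy : y ≠ 0) {d : ι → R} (h : ∑ p, d p • y = y) :
    ∑ p, d p = 1 := by
  rw [← Finset.sum_smul] at h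
  exact smul_left_injective R hy (h.trans (one_smul R y).symm)

variable [DecidableEq ι] [DecidableEq κ]

lemma sum_smul_ite_zero (d : ι → R) (j : ι) (y : M) :
    ∑ p, d p • (if p = j then y else 0) = d j • y := by
  simp [smul_ite]

lemma apply_eq_of_sum_smul_ite_zero_eq (hy : y ≠ 0) {d : ι → R} {e : κ → R} {j : ι} {k : κ}
    (h : ∑ p, d p • (if p = j then y else 0) = ∑ q, e q • (if q = k then y else 0)) :
    d j = e k := by
  rw [sum_smul_ite_zero, sum_smul_ite_zero] at h
  exact smul_left_injective R hy h

end LinearCombination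

theorem stmt_10_general {K : Type*} [Field K] {M : Type*} [AddCommGroup M] [Module K M]
    (hM : ∃ y : M, y ≠ 0) (m₁ m₂ : ℕ) :
    ¬ ∃ (a : Fin (m₁ + m₂) → K) (b : Fin m₁ → K) (c : Fin m₂ → K),
      -- idempotence of f, g₁, g₂
      (∀ x : M, ∑ p : Fin (m₁ + m₂), a p • x = x) ∧
      (∀ x : M, ∑ p : Fin m₁, b p • x = x) ∧
      (∀ x : M, ∑ p : Fin m₂, c p • x = x) ∧
      -- f with y at position i (i ≤ m₁) and x elsewhere equals g₁ with y at position i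
      (∀ (i : Fin m₁) (x y : M),
        (∑ p : Fin (m₁ + m₂), a p • (if p = Fin.castAdd m₂ i then y else x)) =
        (∑ p : Fin m₁, b p • (if p = i then y else x))) ∧
      -- f with y at position m₁+i and x elsewhere equals g₂ with y at position i
      (∀ (i : Fin m₂) (x y : M),
        (∑ p : Fin (m₁ + m₂), a p • (if p = Fin.natAdd m₁ i then y else x)) =
        (∑ p : Fin m₂, c p • (if p = i then y else x))) := by
  rintro ⟨a, b, c, hf, hg₁, hg₂, h₁, h₂⟩
  obtain ⟨y, hy⟩ := hM
  have hab (i : Fin m₁) : a (Fin.castAdd m₂ i) = b i :=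
    apply_eq_of_sum_smul_ite_zero_eq hy (h₁ i 0 y)
  have hac (i : Fin m₂) : a (Fin.natAdd m₁ i) = c i :=
    apply_eq_of_sum_smul_ite_zero_eq hy (h₂ i 0 y)
  have hsum := sum_eq_one_of_sum_smul_eq_self hy (hf y)
  rw [Fin.sum_univ_add] at hsum
  simp only [hab, hac, sum_eq_one_of_sum_smul_eq_self hy (hg₁ y),
    sum_eq_one_of_sum_smul_eq_self hy (hg₂ y)] at hsum
  exact one_ne_zero (add_eq_right.mp hsum)

theorem stmt_10 {K : Type*} [Field K] {M : Type*} [AddCommGroup M] [Module K M]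
    (hM : ∃ y : M, y ≠ 0) (m₁ m₂ : ℕ) (hm₁ : 1 ≤ m₁) (hm₂ : 1 ≤ m₂) :
    ¬ ∃ (a : Fin (m₁ + m₂) → K) (b : Fin m₁ → K) (c : Fin m₂ → K),
      -- idempotence of f, g₁, g₂
      (∀ x : M, ∑ p : Fin (m₁ + m₂), a p • x = x) ∧
      (∀ x : M, ∑ p : Fin m₁, b p • x = x) ∧
      (∀ x : M, ∑ p : Fin m₂, c p • x = x) ∧
      -- f with y at position i (i ≤ m₁) and x elsewhere equals g₁ with y at position i
      (∀ (i : Fin m₁) (x y : M),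
        (∑ p : Fin (m₁ + m₂), a p • (if p = Fin.castAdd m₂ i then y else x)) =
        (∑ p : Fin m₁, b p • (if p = i then y else x))) ∧
      -- f with y at position m₁+i and x elsewhere equals g₂ with y at position i
      (∀ (i : Fin m₂) (x y : M),
        (∑ p : Fin (m₁ + m₂), a p • (if p = Fin.natAdd m₁ i then y else x)) =
        (∑ p : Fin m₂, c p • (if p = i then y else x))) :=
  stmt_10_general hM m₁ m₂
end

section
/- Let x₁,…,xₙ and y₁,…,yₙ be rational numbers with xᵢ ≤ yᵢ for all i. Let x'₁ ≤ … ≤ x'ₙ be the increasing rearrangement of x₁,…,xₙ and y'₁ ≤ … ≤ y'ₙ the increasing rearrangement of y₁,…,yₙ. Then x'ᵢ ≤ y'ᵢ for all i, and the number of indices i with x'ᵢ < y'ᵢ is at least the number of indices i with xᵢ < yᵢ. -/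
/-!
Sorting preserves counts of the form `#{i | f i ≤ a}`, and `x ≤ y` gives `#{y ≤ a} ≤ #{x ≤ a}`;
for sorted tuples this comparison of counts at `a = y'ᵢ` is exactly `x'ᵢ ≤ y'ᵢ`.

For the strict inequalities it suffices to show that sorting does not create equalities, and we
compare value by value. For sorted `x' ≤ y'`, the positions where `x'ᵢ = y'ᵢ = a` lie in the
interval `[#{x' < a}, #{y' ≤ a})`. Since `{y ≤ a} ⊆ {x = y = a} ∪ {x < a}` whenever `x ≤ y`, and
sorting preserves both endpoints, that interval is no longer than `#{x = y = a}`.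
-/

open Finset

variable {α : Type*} [LinearOrder α]

theorem card_filter_comp_perm {ι : Type*} [Fintype ι] (σ : Equiv.Perm ι) (p : ι → Prop)
    [DecidablePred p] : #{i | p (σ i)} = #{i | p i} := by
  rw [← Fintype.card_subtype, ← Fintype.card_subtype]
  exact Fintype.card_congr (σ.subtypeEquiv fun _ => Iff.rfl)

theorem card_filter_lt_add_card_filter_eq {ι : Type*} [Fintype ι] {f g : ι → α} (h : f ≤ g) :
    #{i | f i < g i} + #{i | f i = g i} = Fintype.card ι := by
  have heq : filter (fun i => f i = g i) univ = filter (fun i => ¬f i < g i) univ :=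
    filter_congr fun i _ => ⟨fun e => e.ge.not_gt, fun hn => (h i).antisymm (not_lt.1 hn)⟩
  rw [heq, card_filter_add_card_filter_not, card_univ]

theorem comp_sort_le_comp_sort {n : ℕ} {x y : Fin n → α} (h : x ≤ y) :
    x ∘ Tuple.sort x ≤ y ∘ Tuple.sort y := by
  intro i
  set a := y (Tuple.sort y i)
  have hy : (i : ℕ) < #{j | y j ≤ a} := by
    rw [← card_filter_comp_perm (Tuple.sort y)]
    exact (Tuple.lt_card_le_iff_apply_le_of_monotone (Tuple.monotone_sort y)).2 le_rfl
  have hyx : #{j | y j ≤ a} ≤ #{j | x j ≤ a} :=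
    card_le_card (monotone_filter_right _ fun j _ hj => (h j).trans hj)
  rw [← card_filter_comp_perm (Tuple.sort x) (x · ≤ a)] at hyx
  exact (Tuple.lt_card_le_iff_apply_le_of_monotone (Tuple.monotone_sort x)).1 (hy.trans_le hyx)

theorem Monotone.val_mem_Ico_card_filter {n : ℕ} {f : Fin n → α} (hf : Monotone f) (i : Fin n) :
    (i : ℕ) ∈ Ico #{j | f j < f i} #{j | f j ≤ f i} :=
  mem_Ico.2 ⟨not_lt.1 fun hi => lt_irrefl _ ((Tuple.lt_card_lt_iff_apply_lt_of_monotone hf).1 hi),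
    (Tuple.lt_card_le_iff_apply_le_of_monotone hf).2 le_rfl⟩

theorem card_filter_eq_eq_le_of_monotone {n : ℕ} {f g : Fin n → α} (hf : Monotone f)
    (hg : Monotone g) (a : α) :
    #{i | f i = g i ∧ f i = a} ≤ #{i | g i ≤ a} - #{i | f i < a} := by
  rw [← Nat.card_Ico]
  refine card_le_card_of_injOn Fin.val (fun i hi => ?_) Fin.val_injective.injOn
  obtain ⟨hfg, rfl⟩ := (mem_filter.1 hi).2
  have hg_i := hg.val_mem_Ico_card_filter i
  rw [← hfg] at hg_i
  exact mem_Ico.2 ⟨(mem_Ico.1 (hf.val_mem_Ico_card_filter i)).1, (mem_Ico.1 hg_i).2⟩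

theorem card_filter_le_sub_card_filter_lt_le {ι : Type*} [Fintype ι] {f g : ι → α} (h : f ≤ g)
    (a : α) : #{i | g i ≤ a} - #{i | f i < a} ≤ #{i | f i = g i ∧ f i = a} := by
  classical
  have hcover : filter (fun i => g i ≤ a) univ ⊆
      filter (fun i => f i = g i ∧ f i = a) univ ∪ filter (fun i => f i < a) univ := by
    intro i hi
    simp only [mem_union, mem_filter, mem_univ, true_and] at hi ⊢
    rcases lt_or_ge (f i) a with hlt | hge
    · exact Or.inr hlt
    · have hfa : f i = a := le_antisymm ((h i).trans hi) hge
      exact Or.inl ⟨le_antisymm (h i) (hfa ▸ hi), hfa⟩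
  have := (card_le_card hcover).trans (card_union_le _ _)
  omega

theorem card_filter_comp_sort_eq_le {n : ℕ} {x y : Fin n → α} (h : x ≤ y) :
    #{i | x (Tuple.sort x i) = y (Tuple.sort y i)} ≤ #{i | x i = y i} := by
  have hx_mem (i : Fin n) : x i ∈ univ.image x := mem_image_of_mem x (mem_univ i)
  rw [card_eq_sum_card_fiberwise (f := x ∘ Tuple.sort x) fun i _ => hx_mem _,
    card_eq_sum_card_fiberwise (f := x) fun i _ => hx_mem i]
  refine Finset.sum_le_sum fun a _ => ?_
  simp only [filter_filter, Function.comp_apply]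
  calc _ ≤ #{i | y (Tuple.sort y i) ≤ a} - #{i | x (Tuple.sort x i) < a} :=
        card_filter_eq_eq_le_of_monotone (Tuple.monotone_sort x) (Tuple.monotone_sort y) a
    _ = #{i | y i ≤ a} - #{i | x i < a} := by
        rw [card_filter_comp_perm (Tuple.sort y) (y · ≤ a),
          card_filter_comp_perm (Tuple.sort x) (x · < a)]
    _ ≤ _ := card_filter_le_sub_card_filter_lt_le h a

theorem stmt_12 (n : ℕ) (x y : Fin n → ℚ) (h : ∀ i, x i ≤ y i) :
    (∀ i : Fin n, x (Tuple.sort x i) ≤ y (Tuple.sort y i)) ∧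
    (Finset.univ.filter (fun i : Fin n => x i < y i)).card ≤
      (Finset.univ.filter
        (fun i : Fin n => x (Tuple.sort x i) < y (Tuple.sort y i))).card := by
  have hsort : x ∘ Tuple.sort x ≤ y ∘ Tuple.sort y := comp_sort_le_comp_sort h
  refine ⟨hsort, ?_⟩
  have hxy := card_filter_lt_add_card_filter_eq (f := x) (g := y) h
  have hsorted := card_filter_lt_add_card_filter_eq hsort
  have heq := card_filter_comp_sort_eq_le (x := x) (y := y) h
  simp only [Function.comp_apply] at hsorted
  omega
end

section
/- Let n ≥ 5 and m ≥ 1 with 2m < n. Let b⁽¹⁾,…,b⁽ⁿ⁾ ∈ ℚᵐ be vectors each belonging to V_m. Then the vector whose k-th coordinate is tᴮₙ(b⁽¹⁾ₖ,…,b⁽ⁿ⁾ₖ) also belongs to V_m; that is, V_m is closed under the coordinatewise application of tᴮₙ. -/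
/-!
Each `b⁽ʲ⁾` has a positive coordinate, and since `n > 2m` the pigeonhole principle gives a
coordinate `k` that is positive in at least three of the vectors. The three largest entries of
`(b⁽¹⁾ₖ, …, b⁽ⁿ⁾ₖ)` are then positive, and the trimmed mean keeps the third largest, so the
nonnegative sum defining `tᴮₙ` is positive in coordinate `k`.
-/

/-- The trimmed mean `tᴬₙ(x) = (x₍₂₎ + ⋯ + x₍ₙ₋₁₎)/(n−2)`, where
`x₍₁₎ ≤ … ≤ x₍ₙ₎` is the increasing rearrangement of `x` (here indexed from `0`,
so it sums the sorted entries with 0-based indices `1,…,n-2`). -/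
noncomputable def tA (n : ℕ) (x : Fin n → ℚ) : ℚ :=
  (∑ i ∈ Finset.univ.filter (fun i : Fin n => 1 ≤ (i : ℕ) ∧ (i : ℕ) ≤ n - 2),
      x (Tuple.sort x i)) / ((n : ℚ) - 2)

/-- The trimmed mean `tᴮₙ(x) = (x₍₃₎ + ⋯ + x₍ₙ₋₂₎)/(n−4)`, where
`x₍₁₎ ≤ … ≤ x₍ₙ₎` is the increasing rearrangement of `x` (here indexed from `0`,
so it sums the sorted entries with 0-based indices `2,…,n-3`). -/
noncomputable def tB (n : ℕ) (x : Fin n → ℚ) : ℚ :=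
  (∑ i ∈ Finset.univ.filter (fun i : Fin n => 2 ≤ (i : ℕ) ∧ (i : ℕ) ≤ n - 3),
      x (Tuple.sort x i)) / ((n : ℚ) - 4)

/-- Membership in `V_m`: all coordinates are nonnegative and at least one is nonzero. -/
def Vmem (m : ℕ) (b : Fin m → ℚ) : Prop :=
  (∀ k, 0 ≤ b k) ∧ ∃ k, b k ≠ 0

/-- Membership in `W_m`: either `a₁ + a₂ < 1` and all `bₖ ≥ 0`, or `a₁ + a₂ = 1` and
all `bₖ = 0`. -/
def Wmem (m : ℕ) (a₁ a₂ : ℚ) (b : Fin m → ℚ) : Prop :=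
  (a₁ + a₂ < 1 ∧ ∀ k, 0 ≤ b k) ∨ (a₁ + a₂ = 1 ∧ ∀ k, b k = 0)

open Finset

lemma Tuple.lt_apply_sort_of_card_lt {α : Type*} [LinearOrder α] {n : ℕ} (x : Fin n → α)
    (c : α) (i : Fin n) (h : n - 1 - i < #{j | c < x j}) : c < x (Tuple.sort x i) := by
  by_contra! hle
  -- every entry above `c` sits strictly after position `i` in the increasing rearrangement
  have hmaps : Set.MapsTo (Tuple.sort x).symm (({j | c < x j} : Finset (Fin n)) : Set (Fin n))
      (Ioi i) := by
    intro j hj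
    simp only [coe_filter, mem_univ, true_and, Set.mem_ofPred, coe_Ioi, Set.mem_Ioi] at hj ⊢
    by_contra! hji
    have hmono := Tuple.monotone_sort x hji
    simp only [Function.comp_apply, Equiv.apply_symm_apply] at hmono
    exact (hj.trans_le hmono).not_ge hle
  have := card_le_card_of_injOn _ hmaps (Tuple.sort x).symm.injective.injOn
  rw [Fin.card_Ioi] at this
  omega

lemma tB_nonneg {n : ℕ} (hn : 4 ≤ n) {x : Fin n → ℚ} (hx : ∀ j, 0 ≤ x j) : 0 ≤ tB n x := by
  have : (4 : ℚ) ≤ n := by exact_mod_cast hn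
  exact div_nonneg (sum_nonneg fun _ _ => hx _) (by linarith)

lemma tB_pos {n : ℕ} (hn : 5 ≤ n) {x : Fin n → ℚ} (hx : ∀ j, 0 ≤ x j)
    (h3 : 3 ≤ #{j | 0 < x j}) : 0 < tB n x := by
  have : (5 : ℚ) ≤ n := by exact_mod_cast hn
  refine div_pos (sum_pos' (fun _ _ => hx _) ⟨⟨n - 3, by omega⟩, ?_, ?_⟩) (by linarith)
  · simp only [mem_filter, mem_univ, true_and]
    omega
  · exact Tuple.lt_apply_sort_of_card_lt x 0 _ (by simp only; omega)

lemma exists_lt_card_apply_ne_zero {M : Type*} [Zero M] [DecidableEq M] {n m c : ℕ}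
    (hcm : m * c < n) (b : Fin n → Fin m → M) (hb : ∀ j, ∃ k, b j k ≠ 0) :
    ∃ k, c < #{j | b j k ≠ 0} := by
  choose f hf using hb
  obtain ⟨k, hk⟩ := Fintype.exists_lt_card_fiber_of_mul_lt_card f (by simpa using hcm)
  refine ⟨k, hk.trans_le (card_le_card fun j hj => ?_)⟩
  simp only [mem_filter, mem_univ, true_and] at hj ⊢
  exact hj ▸ hf j

theorem stmt_15_general (n m : ℕ) (hn : 5 ≤ n) (h2m : 2 * m < n)
    (b : Fin n → Fin m → ℚ) (hb : ∀ j, Vmem m (b j)) :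
    Vmem m (fun k => tB n (fun j => b j k)) := by
  refine ⟨fun k => tB_nonneg (by omega) fun j => (hb j).1 k, ?_⟩
  obtain ⟨k, hk⟩ := exists_lt_card_apply_ne_zero (c := 2) (by omega) b fun j => (hb j).2
  have h3 : 3 ≤ #{j | 0 < b j k} :=
    hk.trans_eq (congrArg card (filter_congr fun j _ => ((hb j).1 k).lt_iff_ne'.symm))
  exact ⟨k, (tB_pos hn (fun j => (hb j).1 k) h3).ne'⟩

theorem stmt_15 (n m : ℕ) (hn : 5 ≤ n) (hm : 1 ≤ m) (h2m : 2 * m < n)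
    (b : Fin n → Fin m → ℚ) (hb : ∀ j, Vmem m (b j)) :
    Vmem m (fun k => tB n (fun j => b j k)) :=
  stmt_15_general n m hn h2m b hb
end

section
/- Let n ≥ 5 and m ≥ 1. Let x⁽¹⁾,…,x⁽ⁿ⁾ ∈ ℚ^(2+m) be tuples each belonging to W_m, writing x⁽ʲ⁾ = (a₁ⱼ, a₂ⱼ, b₁ⱼ,…,b_mⱼ). Then the tuple (tᴬₙ(a₁₁,…,a₁ₙ), tᴬₙ(a₂₁,…,a₂ₙ), tᴮₙ(b₁₁,…,b₁ₙ), …, tᴮₙ(b_m1,…,b_mn)) also belongs to W_m. -/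
/-!
The trimmed sum of `x` is `∑ x` minus its minimum and its maximum. If a two-element set `E`
contains a minimiser of `x`, its other element is at most the maximum, so the trimmed sum is
bounded by `∑ j ∉ E, x j`. Choosing `E` to contain minimisers of both `a₁` and `a₂` gives
`(n - 2) (tᴬₙ a₁ + tᴬₙ a₂) ≤ ∑ j ∉ E, (a₁ j + a₂ j) ≤ n - 2`. In the case of equality
`a₁ j + a₂ j = 1`, hence `b j = 0`, for every `j ∉ E`; a nonnegative tuple vanishing off two
indices has all its order statistics except the top two equal to `0`, so every `tᴮₙ` is `0`.
-/

open Finset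

section SortedTuple

variable {α : Type*} [LinearOrder α] {n : ℕ}

lemma apply_sort_le_of_le_symm (x : Fin n → α) {i j : Fin n} (h : i ≤ (Tuple.sort x).symm j) :
    x (Tuple.sort x i) ≤ x j := by
  simpa using Tuple.monotone_sort x h

lemma le_apply_sort_of_symm_le (x : Fin n → α) {i j : Fin n} (h : (Tuple.sort x).symm j ≤ i) :
    x j ≤ x (Tuple.sort x i) := by
  simpa using Tuple.monotone_sort x h

lemma apply_sort_le_of_card_lt {x : Fin n → α} {E : Finset (Fin n)} {c : α}
    (hE : ∀ j ∉ E, x j ≤ c) {i : Fin n} (hi : #E < n - i) : x (Tuple.sort x i) ≤ c := by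
  have hcard : #E < #((Ici i).image (Tuple.sort x)) := by
    rwa [card_image_of_injective _ (Tuple.sort x).injective, Fin.card_Ici]
  obtain ⟨_, hp, hpE⟩ := exists_mem_notMem_of_card_lt_card hcard
  obtain ⟨p, hip, rfl⟩ := mem_image.1 hp
  exact (Tuple.monotone_sort x (mem_Ici.1 hip)).trans (hE _ hpE)

lemma sum_filter_sort_add_sort_zero_add_sort_last [AddCommMonoid α] (x : Fin n → α)
    (hn : 2 ≤ n) :
    ∑ i ∈ univ.filter (fun i : Fin n => 1 ≤ (i : ℕ) ∧ (i : ℕ) ≤ n - 2), x (Tuple.sort x i)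
      + x (Tuple.sort x ⟨0, by omega⟩) + x (Tuple.sort x ⟨n - 1, by omega⟩) = ∑ j, x j := by
  have hI : univ.filter (fun i : Fin n => 1 ≤ (i : ℕ) ∧ (i : ℕ) ≤ n - 2)
      = ((univ.erase ⟨n - 1, by omega⟩).erase ⟨0, by omega⟩) := by
    ext i
    simp only [mem_filter, mem_erase, mem_univ, ne_eq, Fin.ext_iff, true_and, and_true]
    have := i.isLt
    constructor <;> intro <;> omega
  rw [hI, sum_erase_add _ _ (mem_erase.2 ⟨Fin.ne_of_val_ne (show 0 ≠ n - 1 by omega), mem_univ _⟩),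
    sum_erase_add _ _ (mem_univ _)]
  exact Equiv.sum_comp (Tuple.sort x) x

lemma sum_filter_sort_le_sum_compl [AddCommGroup α] [IsOrderedAddMonoid α] {x : Fin n → α}
    {E : Finset (Fin n)} (hE : #E = 2) {u : Fin n} (huE : u ∈ E) (hu : ∀ j, x u ≤ x j) :
    ∑ i ∈ univ.filter (fun i : Fin n => 1 ≤ (i : ℕ) ∧ (i : ℕ) ≤ n - 2), x (Tuple.sort x i)
      ≤ ∑ j ∈ Eᶜ, x j := by
  have hn : 2 ≤ n := by simpa [hE] using E.card_le_univ
  obtain ⟨v, hv⟩ := card_eq_one.1 (by rw [card_erase_of_mem huE, hE] : #(E.erase u) = 1)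
  have hE_sum : x u + x v = ∑ j ∈ E, x j := by
    rw [← add_sum_erase _ _ huE, hv, sum_singleton]
  have hv_le : x v ≤ x (Tuple.sort x ⟨n - 1, by omega⟩) :=
    le_apply_sort_of_symm_le x (Fin.le_def.2 (Nat.le_sub_one_of_lt (Fin.is_lt _)))
  have hsum := sum_filter_sort_add_sort_zero_add_sort_last x hn
  rw [add_assoc] at hsum
  calc _ = ∑ j, x j - (x (Tuple.sort x ⟨0, by omega⟩) + x (Tuple.sort x ⟨n - 1, by omega⟩)) :=
        eq_sub_of_add_eq hsum
    _ ≤ ∑ j, x j - (x u + x v) := sub_le_sub_left (add_le_add (hu _) hv_le) _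
    _ = ∑ j ∈ Eᶜ, x j := by rw [hE_sum, ← sum_compl_add_sum E x, add_sub_cancel_right]

end SortedTuple

lemma exists_tA_add_tA_le {n : ℕ} (hn : 2 ≤ n) (x y : Fin n → ℚ) :
    ∃ E : Finset (Fin n), #E = 2 ∧ tA n x + tA n y ≤ (∑ j ∈ Eᶜ, (x j + y j)) / ((n : ℚ) - 2) := by
  have h0 : 0 < n := by omega
  obtain ⟨E, hsub, hE⟩ := exists_superset_card_eq
    (card_le_two : #{Tuple.sort x ⟨0, h0⟩, Tuple.sort y ⟨0, h0⟩} ≤ 2) (by simpa using hn)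
  have hmin (z : Fin n → ℚ) (j : Fin n) : z (Tuple.sort z ⟨0, h0⟩) ≤ z j :=
    apply_sort_le_of_le_symm z (Fin.le_def.2 (Nat.zero_le _))
  refine ⟨E, hE, ?_⟩
  rw [tA, tA, ← add_div, sum_add_distrib]
  gcongr
  · exact sub_nonneg.2 (by exact_mod_cast hn)
  · exact sum_filter_sort_le_sum_compl hE (hsub (by simp)) (hmin x)
  · exact sum_filter_sort_le_sum_compl hE (hsub (by simp)) (hmin y)

lemma tB_eq_zero {n : ℕ} {x : Fin n → ℚ} (hx : ∀ j, 0 ≤ x j) {E : Finset (Fin n)} (hE : #E ≤ 2)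
    (hxE : ∀ j ∉ E, x j = 0) : tB n x = 0 := by
  rw [tB, sum_eq_zero, zero_div]
  intro i hi
  have hi := (mem_filter.1 hi).2
  have := i.isLt
  exact le_antisymm (apply_sort_le_of_card_lt (fun j hj => (hxE j hj).le) (by omega)) (hx _)

namespace Wmem

variable {m : ℕ} {a₁ a₂ : ℚ} {b : Fin m → ℚ}

lemma add_le_one (h : Wmem m a₁ a₂ b) : a₁ + a₂ ≤ 1 := by
  rcases h with ⟨h, -⟩ | ⟨h, -⟩
  exacts [h.le, h.le]

lemma nonneg (h : Wmem m a₁ a₂ b) (k : Fin m) : 0 ≤ b k := by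
  rcases h with ⟨-, h⟩ | ⟨-, h⟩
  exacts [h k, (h k).ge]

lemma eq_zero_of_add_eq_one (h : Wmem m a₁ a₂ b) (ha : a₁ + a₂ = 1) (k : Fin m) : b k = 0 := by
  rcases h with ⟨h, -⟩ | ⟨-, h⟩
  exacts [absurd ha h.ne, h k]

end Wmem

theorem stmt_16_general (n m : ℕ) (hn : 5 ≤ n)
    (a₁ a₂ : Fin n → ℚ) (b : Fin n → Fin m → ℚ)
    (h : ∀ j, Wmem m (a₁ j) (a₂ j) (fun k => b j k)) :
    Wmem m (tA n a₁) (tA n a₂) (fun k => tB n (fun j => b j k)) := by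
  obtain ⟨E, hE, hle⟩ := exists_tA_add_tA_le (by omega) a₁ a₂
  have hpos : (0 : ℚ) < n - 2 := by rw [sub_pos]; exact_mod_cast (by omega : 2 < n)
  have hsum : ∑ j ∈ Eᶜ, (a₁ j + a₂ j) ≤ ∑ j ∈ Eᶜ, (1 : ℚ) :=
    sum_le_sum fun j _ => (h j).add_le_one
  have hcard : ∑ j ∈ Eᶜ, (1 : ℚ) = n - 2 := by
    rw [sum_const, card_compl, hE, Fintype.card_fin, nsmul_one, Nat.cast_sub (by omega)]
    norm_num
  have hS : (∑ j ∈ Eᶜ, (a₁ j + a₂ j)) / ((n : ℚ) - 2) ≤ 1 := by rwa [div_le_one hpos, ← hcard]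
  rcases (hle.trans hS).lt_or_eq with hlt | heq
  · exact Or.inl ⟨hlt, fun k => tB_nonneg (by omega) fun j => (h j).nonneg k⟩
  · have hone : ∀ j ∈ Eᶜ, a₁ j + a₂ j = 1 := by
      refine (sum_eq_sum_iff_of_le fun j _ => (h j).add_le_one).1 ?_
      rw [hcard, ← div_eq_one_iff_eq hpos.ne']
      exact le_antisymm hS (heq ▸ hle)
    exact Or.inr ⟨heq, fun k => tB_eq_zero (fun j => (h j).nonneg k) hE.le
      fun j hj => (h j).eq_zero_of_add_eq_one (hone j (mem_compl.2 hj)) k⟩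

theorem stmt_16 (n m : ℕ) (hn : 5 ≤ n) (hm : 1 ≤ m)
    (a₁ a₂ : Fin n → ℚ) (b : Fin n → Fin m → ℚ)
    (h : ∀ j, Wmem m (a₁ j) (a₂ j) (fun k => b j k)) :
    Wmem m (tA n a₁) (tA n a₂) (fun k => tB n (fun j => b j k)) :=
  stmt_16_general n m hn a₁ a₂ b h
end

section
/- Let L be the first-order language with a single 4-ary function symbol, and let C' be the L-structure with universe ℚ × ℚ in which the symbol is interpreted as the operation sending ((x₁,u₁),(x₂,u₂),(x₃,u₃),(x₄,u₄)) to (tᴬ₆(x₁,x₂,x₃,x₄,x₄,x₄), tᴮ₆(u₁,u₂,u₃,u₄,u₄,u₄)). Then for every m ≥ 1, C' has no (2+m)-terms. -/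
open FirstOrder Language

/-- The first-order language with a single `n`-ary function symbol (and no relation
symbols); here used with `n = 4`. -/
def LangN (n : ℕ) : Language :=
  ⟨fun k => ULift (PLift (k = n)), fun _ => Empty⟩

/-- The structure `C'` on `ℚ × ℚ`: the unique `4`-ary function symbol acts as
`((x₁,u₁),(x₂,u₂),(x₃,u₃),(x₄,u₄)) ↦ (tᴬ₆(x₁,x₂,x₃,x₄,x₄,x₄), tᴮ₆(u₁,u₂,u₃,u₄,u₄,u₄))`. -/
noncomputable def CpStruct : (LangN 4).Structure (ℚ × ℚ) where
  funMap {_k} f v :=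
    (tA 6 ![(v (Fin.cast f.down.down.symm 0)).1, (v (Fin.cast f.down.down.symm 1)).1,
            (v (Fin.cast f.down.down.symm 2)).1, (v (Fin.cast f.down.down.symm 3)).1,
            (v (Fin.cast f.down.down.symm 3)).1, (v (Fin.cast f.down.down.symm 3)).1],
     tB 6 ![(v (Fin.cast f.down.down.symm 0)).2, (v (Fin.cast f.down.down.symm 1)).2,
            (v (Fin.cast f.down.down.symm 2)).2, (v (Fin.cast f.down.down.symm 3)).2,
            (v (Fin.cast f.down.down.symm 3)).2, (v (Fin.cast f.down.down.symm 3)).2])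
  RelMap {_k} r _ := Empty.elim r

/-- `M` has `(m₁+m₂)`-terms: an idempotent `(m₁+m₂)`-ary term operation `f`, an
idempotent `m₁`-ary term operation `g₁` and an idempotent `m₂`-ary term operation
`g₂` such that `f` with `y` at position `i ≤ m₁` (and `x` elsewhere) equals `g₁` with
`y` at position `i`, and `f` with `y` at position `m₁+i` equals `g₂` with `y` at
position `i`. -/
def HasPlusTerms (L : Language) (M : Type*) [L.Structure M] (m₁ m₂ : ℕ) : Prop :=
  ∃ (f : L.Term (Fin (m₁ + m₂))) (g₁ : L.Term (Fin m₁)) (g₂ : L.Term (Fin m₂)),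
    (∀ x : M, f.realize (fun _ => x) = x) ∧
    (∀ x : M, g₁.realize (fun _ => x) = x) ∧
    (∀ x : M, g₂.realize (fun _ => x) = x) ∧
    (∀ (i : Fin m₁) (x y : M),
      f.realize (fun p => if p = Fin.castAdd m₂ i then y else x) =
      g₁.realize (fun p => if p = i then y else x)) ∧
    (∀ (i : Fin m₂) (x y : M),
      f.realize (fun p => if p = Fin.natAdd m₁ i then y else x) =
      g₂.realize (fun p => if p = i then y else x))

/-!
Each coordinate of `C'` is an algebra in its own right. On first coordinates the operation is
`opA x = tᴬ₆(x₀,x₁,x₂,x₃,x₃,x₃)`, which is monotone and commutes with `a ↦ 1 - a`; on second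
coordinates it is `opB x = tᴮ₆(x₀,x₁,x₂,x₃,x₃,x₃)`, which for nonnegative inputs vanishes iff `x₃`
and one of `x₀, x₁, x₂` vanish.

Let `eᵢ = unitAt i` put `(1,1)` at `i` and `(0,0)` elsewhere. Self-duality gives
`g₁(e₀) + g₁(e₁) = 1` in the first coordinate, hence `f(e₀) + f(e₁) = 1`. The relation
`a + b ≤ 1 ∧ 0 ≤ c ∧ (a + b = 1 → c = 0)` between first coordinates `a, b` and a second coordinate
`c` is compatible with the operation: equality in `opA b ≤ opA (1 - a)` forces equality at `x₃` and
at one of `x₀, x₁, x₂`. Applied to `e₀, e₁, e₂₊ₚ` it shows that `g₂(eₚ) = f(e₂₊ₚ)` has second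
coordinate `0` for every `p`. But following last arguments down to a variable `p`, every term gives
`eₚ` a positive second coordinate.
-/

open Finset

namespace FirstOrder.Language

variable (L : Language) {M : Type*} [L.Structure M] {ι : Type*}

def IsCompatibleRel (R : (ι → M) → Prop) : Prop :=
  ∀ ⦃l⦄ (F : L.Functions l) (x : ι → Fin l → M),
    (∀ j, R fun s => x s j) → R fun s => Structure.funMap F (x s)

variable {L}

theorem Term.realize_of_isCompatibleRel {R : (ι → M) → Prop} (hR : L.IsCompatibleRel R)
    {α : Type*} (t : L.Term α) {v : ι → α → M} (hv : ∀ a, R fun s => v s a) :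
    R fun s => t.realize (v s) := by
  induction t with
  | var a => exact hv a
  | func F ts ih => exact hR F _ ih

end FirstOrder.Language

theorem Tuple.lt_card_le_iff_apply_sort_le {n : ℕ} {α : Type*} [LinearOrder α]
    (x : Fin n → α) (k : Fin n) (a : α) :
    (k : ℕ) < #{i | x i ≤ a} ↔ x (Tuple.sort x k) ≤ a := by
  have hcard : #{i | x (Tuple.sort x i) ≤ a} = #{i | x i ≤ a} := by
    simp only [card_filter]
    exact Equiv.sum_comp (Tuple.sort x) fun i => if x i ≤ a then 1 else 0
  rw [← hcard]
  exact Tuple.lt_card_le_iff_apply_le_of_monotone (Tuple.monotone_sort x)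

def repeatLast (x : Fin 4 → ℚ) : Fin 6 → ℚ := ![x 0, x 1, x 2, x 3, x 3, x 3]

lemma repeatLast_sort_le_iff (x : Fin 4 → ℚ) (k : Fin 6) (a : ℚ) :
    repeatLast x (Tuple.sort (repeatLast x) k) ≤ a ↔
      (k : ℕ) < (if x 0 ≤ a then 1 else 0) + (if x 1 ≤ a then 1 else 0) +
        (if x 2 ≤ a then 1 else 0) + 3 * (if x 3 ≤ a then 1 else 0) := by
  rw [← Tuple.lt_card_le_iff_apply_sort_le, card_filter, Fin.sum_univ_six]
  simp only [repeatLast, Fin.isValue, Matrix.cons_val]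
  by_cases h0 : x 0 ≤ a <;> by_cases h1 : x 1 ≤ a <;> by_cases h2 : x 2 ≤ a <;>
    by_cases h3 : x 3 ≤ a <;> simp [h0, h1, h2, h3]

lemma repeatLast_sort_zero (x : Fin 4 → ℚ) :
    repeatLast x (Tuple.sort (repeatLast x) 0) = univ.inf' univ_nonempty x := by
  refine eq_of_forall_ge_iff fun a => ?_
  rw [repeatLast_sort_le_iff, Finset.inf'_le_iff]
  simp only [mem_univ, true_and, Fin.exists_fin_succ]
  split_ifs <;> simp_all

lemma repeatLast_sort_five (x : Fin 4 → ℚ) :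
    repeatLast x (Tuple.sort (repeatLast x) 5) = univ.sup' univ_nonempty x := by
  refine eq_of_forall_ge_iff fun a => ?_
  rw [repeatLast_sort_le_iff, Finset.sup'_le_iff]
  simp only [mem_univ, forall_const, Fin.forall_fin_succ]
  split_ifs <;> simp_all

lemma repeatLast_sort_three_le_iff (x : Fin 4 → ℚ) (a : ℚ) :
    repeatLast x (Tuple.sort (repeatLast x) 3) ≤ a ↔ x 3 ≤ a ∧ (x 0 ≤ a ∨ x 1 ≤ a ∨ x 2 ≤ a) := by
  rw [repeatLast_sort_le_iff]
  split_ifs <;> simp_all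

noncomputable def opA (x : Fin 4 → ℚ) : ℚ := tA 6 (repeatLast x)
noncomputable def opB (x : Fin 4 → ℚ) : ℚ := tB 6 (repeatLast x)

lemma opA_eq (x : Fin 4 → ℚ) :
    opA x = (x 0 + x 1 + x 2 + 3 * x 3 - univ.inf' univ_nonempty x
      - univ.sup' univ_nonempty x) / 4 := by
  have hmid : ({i | 1 ≤ (i : ℕ) ∧ (i : ℕ) ≤ 6 - 2} : Finset (Fin 6)) = {1, 2, 3, 4} := by decide
  have htotal := Equiv.sum_comp (Tuple.sort (repeatLast x)) (repeatLast x)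
  rw [Fin.sum_univ_six, Fin.sum_univ_six] at htotal
  rw [opA, tA, hmid, sum_insert (by decide), sum_insert (by decide), sum_insert (by decide),
    sum_singleton, ← repeatLast_sort_zero, ← repeatLast_sort_five]
  simp only [repeatLast, Fin.isValue, Matrix.cons_val] at htotal ⊢
  linarith

lemma opB_eq (x : Fin 4 → ℚ) :
    opB x = (repeatLast x (Tuple.sort (repeatLast x) 2)
      + repeatLast x (Tuple.sort (repeatLast x) 3)) / 2 := by
  have hmid : ({i | 2 ≤ (i : ℕ) ∧ (i : ℕ) ≤ 6 - 3} : Finset (Fin 6)) = {2, 3} := by decide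
  rw [opB, tB, hmid, sum_insert (by decide), sum_singleton]
  norm_num

lemma opA_one_sub (x : Fin 4 → ℚ) : opA (fun j => 1 - x j) = 1 - opA x := by
  have hinf : univ.inf' univ_nonempty (fun j => 1 - x j) = 1 - univ.sup' univ_nonempty x := by
    obtain ⟨t, -, ht⟩ := exists_mem_eq_sup' univ_nonempty x
    refine le_antisymm (ht ▸ inf'_le _ (mem_univ t)) (le_inf' _ _ fun j _ => ?_)
    linarith [le_sup' x (mem_univ j)]
  have hsup : univ.sup' univ_nonempty (fun j => 1 - x j) = 1 - univ.inf' univ_nonempty x := by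
    obtain ⟨s, -, hs⟩ := exists_mem_eq_inf' univ_nonempty x
    refine le_antisymm (sup'_le _ _ fun j _ => ?_) (hs ▸ le_sup' (fun j => 1 - x j) (mem_univ s))
    linarith [inf'_le x (mem_univ j)]
  rw [opA_eq, opA_eq, hinf, hsup]
  ring

lemma le_four_mul_opA_sub_opA {w z : Fin 4 → ℚ} (hle : w ≤ z) :
    (z 3 - w 3) + min (min (z 0 - w 0) (z 1 - w 1)) (z 2 - w 2) ≤ 4 * (opA z - opA w) := by
  obtain ⟨s, -, hs⟩ := exists_mem_eq_inf' univ_nonempty w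
  obtain ⟨t, -, ht⟩ := exists_mem_eq_sup' univ_nonempty z
  have hz : ∀ j, univ.inf' univ_nonempty z ≤ z j := fun j => inf'_le _ (mem_univ j)
  have hw : ∀ j, w j ≤ univ.sup' univ_nonempty w := fun j => le_sup' _ (mem_univ j)
  have hmin₀ := min_le_left (min (z 0 - w 0) (z 1 - w 1)) (z 2 - w 2)
  have hmin₁ := min_le_left (z 0 - w 0) (z 1 - w 1)
  have hmin₂ := min_le_right (z 0 - w 0) (z 1 - w 1)
  have hmin₃ := min_le_right (min (z 0 - w 0) (z 1 - w 1)) (z 2 - w 2)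
  rw [opA_eq, opA_eq]
  -- with `min w = w s` and `max z = z t` fixed, each of the 16 cases is linear
  fin_cases s <;> fin_cases t <;> simp only [Fin.zero_eta, Fin.mk_one, Fin.reduceFinMk] at hs ht <;>
    linarith [hz 0, hz 1, hz 2, hz 3, hw 0, hw 1, hw 2, hw 3, hle 0, hle 1, hle 2, hle 3]

lemma opA_mono : Monotone opA := fun w z hle => by
  have := le_four_mul_opA_sub_opA hle
  have := le_min (le_min (sub_nonneg.2 (hle 0)) (sub_nonneg.2 (hle 1))) (sub_nonneg.2 (hle 2))
  linarith [hle 3]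

lemma coords_eq_of_opA_eq_of_le {w z : Fin 4 → ℚ} (hle : w ≤ z) (h : opA w = opA z) :
    w 3 = z 3 ∧ (w 0 = z 0 ∨ w 1 = z 1 ∨ w 2 = z 2) := by
  have hbound := le_four_mul_opA_sub_opA hle
  have hmin := le_min (le_min (sub_nonneg.2 (hle 0)) (sub_nonneg.2 (hle 1))) (sub_nonneg.2 (hle 2))
  rw [h, sub_self, mul_zero] at hbound
  refine ⟨by linarith [hle 3], ?_⟩
  have hmin_le : min (min (z 0 - w 0) (z 1 - w 1)) (z 2 - w 2) ≤ 0 := by linarith [hle 3]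
  simp only [min_le_iff, sub_nonpos] at hmin_le
  rcases hmin_le with (h₀ | h₁) | h₂
  exacts [Or.inl ((hle 0).antisymm h₀), Or.inr (Or.inl ((hle 1).antisymm h₁)),
    Or.inr (Or.inr ((hle 2).antisymm h₂))]

lemma repeatLast_nonneg {x : Fin 4 → ℚ} (hx : ∀ j, 0 ≤ x j) (i : Fin 6) : 0 ≤ repeatLast x i := by
  fin_cases i <;> exact hx _

lemma opB_nonneg {x : Fin 4 → ℚ} (hx : ∀ j, 0 ≤ x j) : 0 ≤ opB x := by
  rw [opB_eq]
  linarith [repeatLast_nonneg hx (Tuple.sort (repeatLast x) 2),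
    repeatLast_nonneg hx (Tuple.sort (repeatLast x) 3)]

lemma opB_eq_zero_iff {x : Fin 4 → ℚ} (hx : ∀ j, 0 ≤ x j) :
    opB x = 0 ↔ x 3 = 0 ∧ (x 0 = 0 ∨ x 1 = 0 ∨ x 2 = 0) := by
  have h23 : repeatLast x (Tuple.sort (repeatLast x) 2)
      ≤ repeatLast x (Tuple.sort (repeatLast x) 3) :=
    Tuple.monotone_sort _ (by decide : (2 : Fin 6) ≤ 3)
  have h2 := repeatLast_nonneg hx (Tuple.sort (repeatLast x) 2)
  have hzero : opB x = 0 ↔ repeatLast x (Tuple.sort (repeatLast x) 3) ≤ 0 := by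
    rw [opB_eq]
    constructor <;> intro h <;> linarith
  rw [hzero, repeatLast_sort_three_le_iff]
  simp only [(hx _).ge_iff_eq']

def unitAt {α : Type*} [DecidableEq α] (c : α) : α → ℚ × ℚ :=
  fun p => if p = c then (1, 1) else (0, 0)

lemma unitAt_add_le_one {α : Type*} [DecidableEq α] {c₀ c₁ c₂ : α}
    (h₀₁ : c₀ ≠ c₁) (h₀₂ : c₀ ≠ c₂) (h₁₂ : c₁ ≠ c₂) (a : α) :
    (unitAt c₀ a).1 + (unitAt c₁ a).1 ≤ 1 ∧ 0 ≤ (unitAt c₂ a).2 ∧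
      ((unitAt c₀ a).1 + (unitAt c₁ a).1 = 1 → (unitAt c₂ a).2 = 0) := by
  unfold unitAt
  by_cases ha₀ : a = c₀
  · subst ha₀; simp [h₀₁, h₀₂]
  by_cases ha₁ : a = c₁
  · subst ha₁; simp [ha₀, h₁₂]
  · simp only [ha₀, ha₁, if_false]
    split_ifs <;> norm_num

lemma unitAt_fst_one_eq (a : Fin 2) : (unitAt 1 a).1 = 1 - (unitAt 0 a).1 := by
  fin_cases a <;> simp [unitAt]

lemma unitAt_snd_pos {α : Type*} [DecidableEq α] (a : α) :
    (∀ p, 0 ≤ (unitAt p a).2) ∧ ∃ p, 0 < (unitAt p a).2 :=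
  ⟨fun p => by unfold unitAt; split_ifs <;> norm_num, a, by simp [unitAt]⟩

section CpStruct

attribute [local instance] CpStruct

lemma isCompatibleRel_of_opA_opB {ι : Type*} {R : (ι → ℚ × ℚ) → Prop}
    (hR : ∀ x : ι → Fin 4 → ℚ × ℚ, (∀ j, R fun s => x s j) →
      R fun s => (opA fun j => (x s j).1, opB fun j => (x s j).2)) :
    (LangN 4).IsCompatibleRel R := by
  rintro l ⟨⟨rfl⟩⟩ x hx
  exact hR x hx

lemma isCompatibleRel_one_sub :
    (LangN 4).IsCompatibleRel fun w : Fin 2 → ℚ × ℚ => (w 1).1 = 1 - (w 0).1 :=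
  isCompatibleRel_of_opA_opB fun x hx => by
    simp only [hx]
    exact opA_one_sub _

lemma isCompatibleRel_add_le_one :
    (LangN 4).IsCompatibleRel fun w : Fin 3 → ℚ × ℚ =>
      (w 0).1 + (w 1).1 ≤ 1 ∧ 0 ≤ (w 2).2 ∧ ((w 0).1 + (w 1).1 = 1 → (w 2).2 = 0) := by
  refine isCompatibleRel_of_opA_opB fun x hx => ?_
  set a : Fin 4 → ℚ := fun j => (x 0 j).1
  set b : Fin 4 → ℚ := fun j => (x 1 j).1
  set c : Fin 4 → ℚ := fun j => (x 2 j).2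
  have hb : b ≤ fun j => 1 - a j := fun j => by linarith [(hx j).1]
  have hc : ∀ j, 0 ≤ c j := fun j => (hx j).2.1
  have hcb : ∀ j, b j = 1 - a j → c j = 0 := fun j h => (hx j).2.2 (by linarith)
  have hab : opA b ≤ 1 - opA a := opA_one_sub a ▸ opA_mono hb
  refine ⟨by linarith, opB_nonneg hc, fun hsum => ?_⟩
  obtain ⟨h3, h012⟩ := coords_eq_of_opA_eq_of_le hb (by rw [opA_one_sub]; linarith)
  refine (opB_eq_zero_iff hc).2 ⟨hcb 3 h3, ?_⟩
  rcases h012 with h | h | h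
  exacts [Or.inl (hcb 0 h), Or.inr (Or.inl (hcb 1 h)), Or.inr (Or.inr (hcb 2 h))]

lemma isCompatibleRel_exists_pos (ι : Type*) :
    (LangN 4).IsCompatibleRel fun w : ι → ℚ × ℚ => (∀ p, 0 ≤ (w p).2) ∧ ∃ p, 0 < (w p).2 := by
  refine isCompatibleRel_of_opA_opB fun x hx => ?_
  have hnonneg (p : ι) : 0 ≤ opB fun j => (x p j).2 := opB_nonneg fun j => (hx j).1 p
  obtain ⟨p, hp⟩ := (hx 3).2
  refine ⟨hnonneg, p, (hnonneg p).lt_of_ne fun h => hp.ne' ?_⟩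
  exact ((opB_eq_zero_iff fun j => (hx j).1 p).1 h.symm).1

theorem stmt_18_general (m : ℕ) :
    ¬ @HasPlusTerms (LangN 4) (ℚ × ℚ) CpStruct 2 m := by
  rintro ⟨f, g₁, g₂, -, -, -, hg₁, hg₂⟩
  have hg₁_dual := Term.realize_of_isCompatibleRel isCompatibleRel_one_sub g₁
    (v := ![unitAt 0, unitAt 1]) unitAt_fst_one_eq
  have hf_sum : (f.realize (unitAt (Fin.castAdd m 0))).1
      + (f.realize (unitAt (Fin.castAdd m 1))).1 = 1 := by
    unfold unitAt at hg₁_dual ⊢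
    rw [hg₁ 0 (0, 0) (1, 1), hg₁ 1 (0, 0) (1, 1)]
    simp only [Matrix.cons_val] at hg₁_dual
    linarith
  have hg₂_zero (p : Fin m) : (g₂.realize (unitAt p)).2 = 0 := by
    have h₀₁ : Fin.castAdd m (0 : Fin 2) ≠ Fin.castAdd m 1 := by simp [Fin.ext_iff]
    have h₀₂ : Fin.castAdd m (0 : Fin 2) ≠ Fin.natAdd 2 p := by simp [Fin.ext_iff]; omega
    have h₁₂ : Fin.castAdd m (1 : Fin 2) ≠ Fin.natAdd 2 p := by simp [Fin.ext_iff]; omega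
    have := (Term.realize_of_isCompatibleRel isCompatibleRel_add_le_one f
      (v := ![unitAt _, unitAt _, unitAt _]) (unitAt_add_le_one h₀₁ h₀₂ h₁₂)).2.2 hf_sum
    simp only [Matrix.cons_val] at this
    unfold unitAt at this ⊢
    rwa [hg₂ p (0, 0) (1, 1)] at this
  obtain ⟨p, hp⟩ := (Term.realize_of_isCompatibleRel (isCompatibleRel_exists_pos (Fin m)) g₂
    (v := unitAt) unitAt_snd_pos).2
  exact hp.ne' (hg₂_zero p)

theorem stmt_18 (m : ℕ) (hm : 1 ≤ m) :
    ¬ @HasPlusTerms (LangN 4) (ℚ × ℚ) CpStruct 2 m :=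
  stmt_18_general m

end CpStruct
end

section
/- Let m ≥ 1 and let x, y, z, w ∈ ℚᵐ be vectors each belonging to V_m. Then the vector whose k-th coordinate is tᴮ₆(xₖ, yₖ, zₖ, wₖ, wₖ, wₖ) also belongs to V_m; that is, V_m is closed under the coordinatewise application of the 4-ary operation s(a,b,c,d) = tᴮ₆(a,b,c,d,d,d), for every m. -/
/-! A coordinate of `s(x, y, z, w)` is the mean of the third and fourth smallest of
`xₖ, yₖ, zₖ, wₖ, wₖ, wₖ`. The fourth smallest is at least `wₖ`, since only the three entries
`xₖ, yₖ, zₖ` can lie below `wₖ`; so the coordinate is positive wherever `wₖ` is. -/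

open Finset

theorem Tuple.le_apply_sort_iff {n : ℕ} {α : Type*} [LinearOrder α] (v : Fin n → α)
    (j : Fin n) (a : α) : a ≤ v (Tuple.sort v j) ↔ #{i | v i < a} ≤ j := by
  have hcard : #{i | v (Tuple.sort v i) < a} = #{i | v i < a} :=
    card_equiv (Tuple.sort v) (by simp)
  rw [← not_lt, ← not_lt, ← hcard]
  exact not_congr (Tuple.lt_card_lt_iff_apply_lt_of_monotone (Tuple.monotone_sort v)).symm

theorem tB_six_eq (v : Fin 6 → ℚ) :
    tB 6 v = (v (Tuple.sort v 2) + v (Tuple.sort v 3)) / 2 := by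
  unfold tB
  norm_num [sum_filter, Fin.sum_univ_six]

theorem tB_six_nonneg {v : Fin 6 → ℚ} (hv : ∀ i, 0 ≤ v i) : 0 ≤ tB 6 v := by
  rw [tB_six_eq]
  have := hv (Tuple.sort v 2)
  have := hv (Tuple.sort v 3)
  linarith

theorem le_apply_sort_three (a b c d : ℚ) :
    d ≤ ![a, b, c, d, d, d] (Tuple.sort ![a, b, c, d, d, d] 3) := by
  rw [Tuple.le_apply_sort_iff]
  have hsub : ({i | ![a, b, c, d, d, d] i < d} : Finset (Fin 6)) ⊆ {0, 1, 2} := by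
    intro i
    fin_cases i <;> simp
  exact (card_le_card hsub).trans (by decide)

theorem tB_six_pos {a b c d : ℚ} (ha : 0 ≤ a) (hb : 0 ≤ b) (hc : 0 ≤ c) (hd : 0 < d) :
    0 < tB 6 ![a, b, c, d, d, d] := by
  have hv : ∀ i, 0 ≤ ![a, b, c, d, d, d] i := by
    intro i
    fin_cases i <;> simp [ha, hb, hc, hd.le]
  rw [tB_six_eq]
  have := hv (Tuple.sort ![a, b, c, d, d, d] 2)
  have := le_apply_sort_three a b c d
  linarith

theorem stmt_19_general (m : ℕ) (x y z w : Fin m → ℚ)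
    (hx : Vmem m x) (hy : Vmem m y) (hz : Vmem m z) (hw : Vmem m w) :
    Vmem m (fun k => tB 6 ![x k, y k, z k, w k, w k, w k]) := by
  refine ⟨fun k => tB_six_nonneg fun i => ?_, ?_⟩
  · fin_cases i <;> simp [hx.1 k, hy.1 k, hz.1 k, hw.1 k]
  · obtain ⟨k, hk⟩ := hw.2
    exact ⟨k, (tB_six_pos (hx.1 k) (hy.1 k) (hz.1 k) ((hw.1 k).lt_of_ne' hk)).ne'⟩

theorem stmt_19 (m : ℕ) (hm : 1 ≤ m) (x y z w : Fin m → ℚ)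
    (hx : Vmem m x) (hy : Vmem m y) (hz : Vmem m z) (hw : Vmem m w) :
    Vmem m (fun k => tB 6 ![x k, y k, z k, w k, w k, w k]) :=
  stmt_19_general m x y z w hx hy hz hw
end
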